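/- arXiv:2405.03179 — 4 statements merged into one kernel-verified Lean document; each statement's English description precedes it below -/
import Mathlib

section
/- Suppose p ∈ 𝕃_n^reg. Then either ∂p = 0, or the Laurent polynomial q = ∂p / reg(∂p) is n-regular and satisfies pdeg(q) <_rlex pdeg(p), where <_rlex is the reverse lexicographic order on ℕ^n (namely (m_1,…,m_n) <_rlex (m_1′,…,m_n′) iff there is an index i with m_j = m_j′ for all i < j ≤ n and m_i < m_i′). -/
open scoped BigOperators

noncomputable section

/-- The coefficient ring `R = ℤ[R₁,…,Rₙ]`. -/
abbrev Rring (n : ℕ) : Type := MvPolynomial (Fin n) ℤ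

/-- The ring `𝕃ₙ` of Laurent polynomials in `x₁,y₁,…,xₙ,yₙ` over `R`,
encoded as the monoid algebra of `ℤⁿ × ℤⁿ` (the exponents `(k,l)`). -/
abbrev Lring (n : ℕ) : Type :=
  AddMonoidAlgebra (Rring n) ((Fin n → ℤ) × (Fin n → ℤ))

namespace Panazzolo

/-- `Δⱼ = R₁⋯Rⱼ` (here `j` is 1-indexed: `Dl n j = ∏_{i<j} X i`). -/
def Dl (n j : ℕ) : Rring n :=
  ∏ i ∈ Finset.univ.filter (fun i : Fin n => (i : ℕ) < j), MvPolynomial.X i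

/-- Exponent of `P_{j-1} = x₁⋯x_{j-1}/(y₁⋯y_{j-1})` (with `j` 0-indexed). -/
def Pexp (n : ℕ) (j : Fin n) : (Fin n → ℤ) × (Fin n → ℤ) :=
  (fun i => if i < j then 1 else 0, fun i => if i < j then -1 else 0)

/-- The derivation `∂` on `𝕃ₙ`, determined by
`∂xⱼ = ∂yⱼ = Δⱼ xⱼ (x₁⋯x_{j-1})/(y₁⋯y_{j-1})`. -/
def der (n : ℕ) (p : Lring n) : Lring n :=
  p.coeff.sum fun kl c => ∑ j : Fin n,
    (AddMonoidAlgebra.single (kl + Pexp n j) ((kl.1 j) • (Dl n ((j : ℕ) + 1) * c)) +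
     AddMonoidAlgebra.single (kl + Pexp n j + (Pi.single j 1, Pi.single j (-1)))
       ((kl.2 j) • (Dl n ((j : ℕ) + 1) * c)))

/-- The coefficient `q` of `xᵢ^α yᵢ^β` in `p`, viewed as a polynomial in `(xᵢ,yᵢ)`
(the variables `xᵢ,yᵢ` are erased from the result). -/
def coeffAt (n : ℕ) (i : Fin n) (α β : ℤ) (p : Lring n) : Lring n :=
  ∑ kl ∈ p.coeff.support.filter (fun kl => kl.1 i = α ∧ kl.2 i = β),
    AddMonoidAlgebra.single (Function.update kl.1 i 0, Function.update kl.2 i 0) (p.coeff kl)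

/-- `k`-regularity of a Laurent polynomial (the paper's `𝕃ₖ^reg`), defined inductively:
`0`-regular means a nonzero element of the coefficient ring `R`; `p` is `(k+1)`-regular if it
is homogeneous, involves only the variables `x₁,y₁,…,x_{k+1},y_{k+1}`, is a genuine polynomial
in `(x_{k+1},y_{k+1})` of degree `m`, and the coefficient `q₀` of `x_{k+1}^0 y_{k+1}^m`
is `k`-regular. -/
def IsReg (n : ℕ) : ℕ → Lring n → Prop
  | 0, p => p ≠ 0 ∧ ∀ kl ∈ p.coeff.support, kl = 0
  | (k+1), p =>
      (∀ kl ∈ p.coeff.support, ∀ i : Fin n, k + 1 ≤ (i : ℕ) → kl.1 i = 0 ∧ kl.2 i = 0) ∧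
      (∃ d : Fin n → ℤ, ∀ kl ∈ p.coeff.support, kl.1 + kl.2 = d) ∧
      (∃ m : ℕ, (∀ kl ∈ p.coeff.support, ∀ i : Fin n, (i : ℕ) = k →
          0 ≤ kl.1 i ∧ 0 ≤ kl.2 i ∧ kl.1 i + kl.2 i = (m : ℤ)) ∧
        ∀ i : Fin n, (i : ℕ) = k → IsReg n k (coeffAt n i 0 (m : ℤ) p))

-- The exponent of the regularization monomial `reg(p)` (computed through the first `k`
-- variable pairs, from the top one down).
open Classical in
def regExp (n : ℕ) : ℕ → Lring n → (Fin n → ℤ) × (Fin n → ℤ)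
  | 0, _ => 0
  | (k+1), p =>
      if h : k < n ∧ p ≠ 0 then
        have hs : p.coeff.support.Nonempty := Finsupp.support_nonempty_iff.mpr (AddMonoidAlgebra.coeff_eq_zero.not.mpr h.2)
        let i : Fin n := ⟨k, h.1⟩
        let n0 : ℤ := (p.coeff.support.image fun kl => kl.1 i).min' (hs.image _)
        let l0 : ℤ := (p.coeff.support.image fun kl => kl.2 i).min' (hs.image _)
        let n1 : ℤ := (p.coeff.support.image fun kl => kl.2 i).max' (hs.image _)
        (Pi.single i n0, Pi.single i l0) + regExp n k (coeffAt n i n0 n1 p)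
      else 0

/-- Division by the regularization monomial: `q ↦ q/reg(q)`. -/
def divreg (n : ℕ) (q : Lring n) : Lring n :=
  AddMonoidAlgebra.single (-(regExp n n q)) 1 * q

/-- The derivation-division sequence `p⁽⁰⁾ = p`, `p⁽ᵏ⁺¹⁾ = ∂p⁽ᵏ⁾ / reg(∂p⁽ᵏ⁾)`. -/
def seqDD (n : ℕ) (p : Lring n) : ℕ → Lring n
  | 0 => p
  | (k+1) => divreg n (der n (seqDD n p k))

/-- `p` belongs to the coefficient ring `R ⊆ 𝕃ₙ`. -/
def InR (n : ℕ) (p : Lring n) : Prop := ∀ kl ∈ p.coeff.support, kl = 0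

/-- The reverse lexicographic (strict) order on `ℕⁿ`. -/
def rlexLt (n : ℕ) (d d' : Fin n → ℕ) : Prop :=
  ∃ i : Fin n, (∀ j : Fin n, i < j → d j = d' j) ∧ d i < d' i

/-- The monomial `yⱼ^e` (with `j` 1-indexed). -/
def ymon (n : ℕ) (j e : ℕ) : Lring n :=
  AddMonoidAlgebra.single (0, fun i : Fin n => if (i : ℕ) + 1 = j then (e : ℤ) else 0) 1

/-- The nested expression `Q_j + (⋯(Q₂ + (Q₁ + α y₁^{m₁}) y₂^{m₂})⋯) y_j^{m_j}`. -/
def nestedP (n : ℕ) (α : Rring n) (Q : ℕ → Lring n) (m : ℕ → ℕ) : ℕ → Lring n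
  | 0 => AddMonoidAlgebra.single 0 α
  | (j+1) => Q (j+1) + nestedP n α Q m j * ymon n (j+1) (m (j+1))

/-- Auxiliary recursion for the function `H_k` of Section 6. -/
def Haux {k : ℕ} (f : (Fin (k+1) → ℕ) → ℕ) : (Fin (k+1) → ℕ) → ℕ → ℕ
  | μ, 0 => f μ
  | μ, (t+1) => Haux f (Function.update μ (Fin.last k) (μ (Fin.last k) + f μ)) t

/-- The functions `H_k : ℕᵏ → ℕ` of Section 6. -/
def Hfun : (k : ℕ) → (Fin k → ℕ) → ℕ
  | 0, _ => 0
  | 1, m => m 0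
  | (k+2), m => Haux (Hfun (k+1)) (Fin.init m) (m (Fin.last (k+1)))

/-- The regular Laurent polynomial
`p = Δₙ ∑_{j=1}^n (Δⱼ−Δ_{j−1}) (∏_{i=1}^{j−1} xᵢ)(∏_{i=j}^{n−1} yᵢ)`
associated with equation (1) (it lives in the variables `x₁,…,x_{n−1},y₁,…,y_{n−1}`). -/
def pSpec (n : ℕ) : Lring n :=
  ∑ j ∈ Finset.Icc 1 n,
    AddMonoidAlgebra.single
      ((fun i : Fin n => if (i : ℕ) + 1 ≤ j - 1 then 1 else 0),
       (fun i : Fin n => if j ≤ (i : ℕ) + 1 ∧ (i : ℕ) + 1 ≤ n - 1 then (1 : ℤ) else 0))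
      (Dl n n * (Dl n j - Dl n (j - 1)))

/-- `DD(n)`: the number of steps of the derivation-division algorithm applied to `pSpec n`. -/
def DDnum (n : ℕ) : ℕ := sInf {m : ℕ | InR n (seqDD n (pSpec n) m)}

/-- The functions `gᵢ` : `g₀(x) = x`, `g_{i+1}(x) = a_{i+1} + gᵢ(x)^{r_{i+1}}` (real powers),
with 1-indexed parameter families `a r : ℕ → ℝ`. -/
def gfun (a r : ℕ → ℝ) : ℕ → ℝ → ℝ
  | 0 => fun x => x
  | (i+1) => fun x => a (i+1) + gfun a r i x ^ r (i+1)

/-- The functions `fᵢ` : `f_{i+1}(x) = gᵢ(x)^{r_{i+1}}`. -/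
def ffun (a r : ℕ → ℝ) : ℕ → ℝ → ℝ
  | 0 => fun _ => 1
  | (i+1) => fun x => gfun a r i x ^ r (i+1)

/-- The domain `I(a,r)`: the set of `x` where `g₀(x),…,gₙ(x)` are all strictly positive. -/
def Iset (n : ℕ) (a r : ℕ → ℝ) : Set ℝ := {x : ℝ | ∀ i ≤ n, 0 < gfun a r i x}

/-- The solution set `Sₙ(b,a,r) = {x ∈ I(a,r) : gₙ(x) = b x}`. -/
def Sset (n : ℕ) (b : ℝ) (a r : ℕ → ℝ) : Set ℝ :=
  {x ∈ Iset n a r | gfun a r n x = b * x}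

/-- The evaluation morphism `Ψ : 𝕃ₙ → C^ω(I(a,r))`, `Rᵢ ↦ rᵢ`, `xᵢ ↦ fᵢ`, `yᵢ ↦ gᵢ`
(defined pointwise). -/
def Psi (n : ℕ) (a r : ℕ → ℝ) (p : Lring n) : ℝ → ℝ := fun x =>
  p.coeff.sum fun kl c =>
    (MvPolynomial.aeval (fun i : Fin n => r ((i : ℕ) + 1)) c : ℝ) *
      ∏ i : Fin n, (ffun a r ((i : ℕ) + 1) x ^ kl.1 i * gfun a r ((i : ℕ) + 1) x ^ kl.2 i)

/-- `δⱼ = r₁⋯rⱼ` (with `δ₀ = 1`). -/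
def delta (r : ℕ → ℝ) (j : ℕ) : ℝ := ∏ i ∈ Finset.Icc 1 j, r i

/-- Extension of a `Fin n`-indexed parameter vector to a 1-indexed family `ℕ → ℝ`. -/
def extF (n : ℕ) (v : Fin n → ℝ) : ℕ → ℝ :=
  fun i => if h : 1 ≤ i ∧ i ≤ n then v ⟨i - 1, by omega⟩ else 0

end Panazzolo
namespace Statement5Aux
open Panazzolo Function

variable {n : ℕ}

instance : CoeFun (Lring n) (fun _ => (Fin n → ℤ) × (Fin n → ℤ) → Rring n) := ⟨fun p => p.coeff⟩

/-- The exponent shift of the `∂yⱼ` term. -/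
def Ej (n : ℕ) (j : Fin n) : (Fin n → ℤ) × (Fin n → ℤ) := (Pi.single j 1, Pi.single j (-1))

lemma shift_apply (e : (Fin n → ℤ) × (Fin n → ℤ)) (q : Lring n) (w : (Fin n → ℤ) × (Fin n → ℤ)) :
    (AddMonoidAlgebra.single (-e) (1 : Rring n) * q) w = q (e + w) := by
  rw [AddMonoidAlgebra.coeff_single_mul_apply, one_mul, neg_neg]

lemma coeffAt_apply (i : Fin n) (α β : ℤ) (p : Lring n) (w : (Fin n → ℤ) × (Fin n → ℤ)) :
    coeffAt n i α β p w =
      if w.1 i = 0 ∧ w.2 i = 0 then p (update w.1 i α, update w.2 i β) else 0 := by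
  classical
  rw [coeffAt, AddMonoidAlgebra.coeff_sum, Finset.sum_apply']
  by_cases hw : w.1 i = 0 ∧ w.2 i = 0
  · rw [if_pos hw]
    rw [Finset.sum_eq_single (update w.1 i α, update w.2 i β)]
    · rw [AddMonoidAlgebra.coeff_single, Finsupp.single_apply, if_pos]
      refine Prod.ext ?_ ?_ <;> dsimp only <;> funext j <;>
          rcases eq_or_ne j i with rfl | hj
      · simp [hw.1]
      · simp [Function.update_of_ne hj]
      · simp [hw.2]
      · simp [Function.update_of_ne hj]
    · intro b hb hne
      rw [AddMonoidAlgebra.coeff_single, Finsupp.single_apply, if_neg]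
      intro h
      rcases Finset.mem_filter.mp hb with ⟨_, hb1, hb2⟩
      apply hne
      have h1 := congrArg Prod.fst h
      have h2 := congrArg Prod.snd h
      dsimp only at h1 h2
      refine Prod.ext ?_ ?_ <;> dsimp only
      · funext j
        rcases eq_or_ne j i with rfl | hj
        · simp [hb1]
        · rw [Function.update_of_ne hj, ← h1, Function.update_of_ne hj]
      · funext j
        rcases eq_or_ne j i with rfl | hj
        · simp [hb2]
        · rw [Function.update_of_ne hj, ← h2, Function.update_of_ne hj]
    · intro hnot
      rw [AddMonoidAlgebra.coeff_single, Finsupp.single_apply]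
      split
      · by_contra hne
        exact hnot (Finset.mem_filter.mpr ⟨Finsupp.mem_support_iff.mpr hne, by simp, by simp⟩)
      · rfl
  · rw [if_neg hw]
    apply Finset.sum_eq_zero
    intro kl _
    rw [AddMonoidAlgebra.coeff_single, Finsupp.single_apply, if_neg]
    intro h
    apply hw
    have h1 := congrArg Prod.fst h
    have h2 := congrArg Prod.snd h
    dsimp only at h1 h2
    constructor
    · rw [← h1]; simp
    · rw [← h2]; simp

lemma lsum_apply {ι : Type*} (s : Finset ι) (f : ι → Lring n)
    (w : (Fin n → ℤ) × (Fin n → ℤ)) : (∑ k ∈ s, f k) w = ∑ k ∈ s, f k w := by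
  rw [AddMonoidAlgebra.coeff_sum, Finset.sum_apply']

lemma ladd_apply (f g : Lring n) (w : (Fin n → ℤ) × (Fin n → ℤ)) :
    (f + g) w = f w + g w := rfl

lemma lsingle_apply (a w : (Fin n → ℤ) × (Fin n → ℤ)) (c : Rring n) :
    (AddMonoidAlgebra.single a c) w = if a = w then c else 0 :=
  Finsupp.single_apply

lemma sum_single_shift (p : Lring n) (g : (Fin n → ℤ) × (Fin n → ℤ) → Rring n)
    (hg : ∀ kl, p kl = 0 → g kl = 0) (a w : (Fin n → ℤ) × (Fin n → ℤ)) :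
    (∑ kl ∈ p.coeff.support, if kl + a = w then g kl else 0) = g (w - a) := by
  classical
  have h1 : (∑ kl ∈ p.coeff.support, if kl + a = w then g kl else 0)
      = ∑ kl ∈ p.coeff.support, if kl = w - a then g kl else 0 := by
    refine Finset.sum_congr rfl fun kl _ => ?_
    simp only [eq_sub_iff_add_eq]
  rw [h1, Finset.sum_ite_eq' p.coeff.support (w - a) g]
  split
  · rfl
  · exact (hg _ (Finsupp.notMem_support_iff.mp (by assumption))).symm

lemma der_apply (p : Lring n) (w : (Fin n → ℤ) × (Fin n → ℤ)) :
    der n p w = ∑ j : Fin n,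
      (w.1 j • (Dl n ((j : ℕ) + 1) * p (w - Pexp n j)) +
       (w.2 j + 1) • (Dl n ((j : ℕ) + 1) * p (w - (Pexp n j + Ej n j)))) := by
  classical
  rw [der, Finsupp.sum, lsum_apply]
  simp only [lsum_apply, ladd_apply, lsingle_apply, add_assoc]
  rw [Finset.sum_comm]
  refine Finset.sum_congr rfl fun j _ => ?_
  rw [Finset.sum_add_distrib]
  rw [show ((Pi.single j (1:ℤ) : Fin n → ℤ), (Pi.single j (-1:ℤ) : Fin n → ℤ)) = Ej n j from rfl]
  rw [sum_single_shift p (fun kl => kl.1 j • (Dl n ((j : ℕ) + 1) * p kl))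
      (fun kl h => by simp only [h, mul_zero, smul_zero]) (Pexp n j) w]
  rw [sum_single_shift p (fun kl => kl.2 j • (Dl n ((j : ℕ) + 1) * p kl))
      (fun kl h => by simp only [h, mul_zero, smul_zero]) (Pexp n j + Ej n j) w]
  congr 1
  · congr 1
    show w.1 j - (Pexp n j).1 j = w.1 j
    simp [Pexp]
  · congr 1
    show w.2 j - (Pexp n j + Ej n j).2 j = w.2 j + 1
    simp [Pexp, Ej]

lemma pexp_fst (j i : Fin n) : (Pexp n j).1 i = if i < j then 1 else 0 := rfl
lemma pexp_snd (j i : Fin n) : (Pexp n j).2 i = if i < j then -1 else 0 := rfl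
lemma ej_fst (j i : Fin n) : (Ej n j).1 i = if i = j then 1 else 0 := by
  simp [Ej, Pi.single_apply]
lemma ej_snd (j i : Fin n) : (Ej n j).2 i = if i = j then -1 else 0 := by
  simp [Ej, Pi.single_apply]

lemma der_support {p : Lring n} {w : (Fin n → ℤ) × (Fin n → ℤ)} (hw : der n p w ≠ 0) :
    ∃ kl, p kl ≠ 0 ∧ ∃ j : Fin n,
      (w = kl + Pexp n j ∧ kl.1 j ≠ 0) ∨ (w = kl + (Pexp n j + Ej n j) ∧ kl.2 j ≠ 0) := by
  rw [der_apply] at hw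
  obtain ⟨j, -, hj⟩ := Finset.exists_ne_zero_of_sum_ne_zero hw
  by_cases h1 : w.1 j • (Dl n ((j : ℕ) + 1) * p (w - Pexp n j)) ≠ 0
  · refine ⟨w - Pexp n j, fun h => h1 (by rw [h, mul_zero, smul_zero]), j, Or.inl ⟨?_, ?_⟩⟩
    · rw [sub_add_cancel]
    · show (w - Pexp n j).1 j ≠ 0
      have : w.1 j ≠ 0 := fun h => h1 (by rw [h, zero_smul])
      simpa [Pexp] using this
  · push_neg at h1
    have h2 : (w.2 j + 1) • (Dl n ((j : ℕ) + 1) * p (w - (Pexp n j + Ej n j))) ≠ 0 := by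
      intro h; exact hj (by rw [h1, h, add_zero])
    refine ⟨w - (Pexp n j + Ej n j), fun h => h2 (by rw [h, mul_zero, smul_zero]), j,
      Or.inr ⟨?_, ?_⟩⟩
    · rw [sub_add_cancel]
    · show (w - (Pexp n j + Ej n j)).2 j ≠ 0
      have : w.2 j + 1 ≠ 0 := fun h => h2 (by rw [h, zero_smul])
      simpa [Pexp, Ej, sub_eq_iff_eq_add, sub_eq_zero] using this

lemma shift_deg (a : (Fin n → ℤ) × (Fin n → ℤ)) (hj : ∃ j : Fin n, a = Pexp n j ∨ a = Pexp n j + Ej n j)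
    (kl : (Fin n → ℤ) × (Fin n → ℤ)) (i : Fin n) :
    (kl + a).1 i + (kl + a).2 i = kl.1 i + kl.2 i := by
  obtain ⟨j, hj | hj⟩ := hj <;> subst hj <;>
    simp only [Prod.fst_add, Prod.snd_add, Pi.add_apply, pexp_fst, pexp_snd, ej_fst, ej_snd] <;>
    split_ifs <;> ring

lemma der_deg {p : Lring n} {D : Fin n → ℤ}
    (hD : ∀ kl ∈ p.coeff.support, ∀ i : Fin n, kl.1 i + kl.2 i = D i) :
    ∀ w ∈ (der n p).coeff.support, ∀ i : Fin n, w.1 i + w.2 i = D i := by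
  intro w hw i
  obtain ⟨kl, hkl, j, hj⟩ := der_support (Finsupp.mem_support_iff.mp hw)
  have hkl' := hD kl (Finsupp.mem_support_iff.mpr hkl) i
  rcases hj with ⟨rfl, -⟩ | ⟨rfl, -⟩
  · rw [shift_deg _ ⟨j, Or.inl rfl⟩, hkl']
  · rw [shift_deg _ ⟨j, Or.inr rfl⟩, hkl']

lemma der_eq_zero_of_const {p : Lring n} (h : ∀ kl ∈ p.coeff.support, kl = 0) : der n p = 0 := by
  refine AddMonoidAlgebra.ext <| Finsupp.ext fun w => ?_
  show der n p w = 0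
  rw [der_apply]
  refine Finset.sum_eq_zero fun j _ => ?_
  have t1 : w.1 j • (Dl n ((j : ℕ) + 1) * p (w - Pexp n j)) = 0 := by
    by_cases h1 : p (w - Pexp n j) = 0
    · rw [h1, mul_zero, smul_zero]
    · have h0 := h _ (Finsupp.mem_support_iff.mpr h1)
      rw [sub_eq_zero] at h0
      rw [show w.1 j = (Pexp n j).1 j from by rw [h0], pexp_fst]
      simp
  have t2 : (w.2 j + 1) • (Dl n ((j : ℕ) + 1) * p (w - (Pexp n j + Ej n j))) = 0 := by
    by_cases h1 : p (w - (Pexp n j + Ej n j)) = 0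
    · rw [h1, mul_zero, smul_zero]
    · have h0 := h _ (Finsupp.mem_support_iff.mpr h1)
      rw [sub_eq_zero] at h0
      have : w.2 j + 1 = 0 := by
        rw [show w.2 j = (Pexp n j + Ej n j).2 j from by rw [h0]]
        simp [pexp_snd, ej_snd, Prod.snd_add]
      rw [this, zero_smul]
  rw [t1, t2, add_zero]

/-- The data of one regularization step. -/
def n0v (k : ℕ) (q : Lring n) (h1 : k < n) (h2 : q ≠ 0) : ℤ :=
  ((q.coeff.support.image fun kl => kl.1 ⟨k, h1⟩).min'
    ((Finsupp.support_nonempty_iff.mpr (AddMonoidAlgebra.coeff_eq_zero.not.mpr h2)).image _))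
def l0v (k : ℕ) (q : Lring n) (h1 : k < n) (h2 : q ≠ 0) : ℤ :=
  ((q.coeff.support.image fun kl => kl.2 ⟨k, h1⟩).min'
    ((Finsupp.support_nonempty_iff.mpr (AddMonoidAlgebra.coeff_eq_zero.not.mpr h2)).image _))
def n1v (k : ℕ) (q : Lring n) (h1 : k < n) (h2 : q ≠ 0) : ℤ :=
  ((q.coeff.support.image fun kl => kl.2 ⟨k, h1⟩).max'
    ((Finsupp.support_nonempty_iff.mpr (AddMonoidAlgebra.coeff_eq_zero.not.mpr h2)).image _))

lemma n0v_le {k : ℕ} {q : Lring n} (h1 : k < n) (h2 : q ≠ 0)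
    {kl : (Fin n → ℤ) × (Fin n → ℤ)} (hkl : kl ∈ q.coeff.support) :
    n0v k q h1 h2 ≤ kl.1 ⟨k, h1⟩ := by
  have h := Finset.min'_le (q.coeff.support.image fun kl => kl.1 ⟨k, h1⟩) (kl.1 ⟨k, h1⟩)
    (Finset.mem_image_of_mem (fun kl => kl.1 ⟨k, h1⟩) hkl)
  exact h

lemma l0v_le {k : ℕ} {q : Lring n} (h1 : k < n) (h2 : q ≠ 0)
    {kl : (Fin n → ℤ) × (Fin n → ℤ)} (hkl : kl ∈ q.coeff.support) :
    l0v k q h1 h2 ≤ kl.2 ⟨k, h1⟩ := by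
  have h := Finset.min'_le (q.coeff.support.image fun kl => kl.2 ⟨k, h1⟩) (kl.2 ⟨k, h1⟩)
    (Finset.mem_image_of_mem (fun kl => kl.2 ⟨k, h1⟩) hkl)
  exact h

lemma le_n1v {k : ℕ} {q : Lring n} (h1 : k < n) (h2 : q ≠ 0)
    {kl : (Fin n → ℤ) × (Fin n → ℤ)} (hkl : kl ∈ q.coeff.support) :
    kl.2 ⟨k, h1⟩ ≤ n1v k q h1 h2 := by
  have h := Finset.le_max' (q.coeff.support.image fun kl => kl.2 ⟨k, h1⟩) (kl.2 ⟨k, h1⟩)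
    (Finset.mem_image_of_mem (fun kl => kl.2 ⟨k, h1⟩) hkl)
  exact h

lemma n0v_mem {k : ℕ} {q : Lring n} (h1 : k < n) (h2 : q ≠ 0) :
    ∃ kl ∈ q.coeff.support, kl.1 ⟨k, h1⟩ = n0v k q h1 h2 := by
  have hmem := Finset.min'_mem (q.coeff.support.image fun kl => kl.1 ⟨k, h1⟩)
    ((Finsupp.support_nonempty_iff.mpr (AddMonoidAlgebra.coeff_eq_zero.not.mpr h2)).image _)
  obtain ⟨kl, hkl, he⟩ := Finset.mem_image.mp hmem
  exact ⟨kl, hkl, he⟩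

lemma l0v_mem {k : ℕ} {q : Lring n} (h1 : k < n) (h2 : q ≠ 0) :
    ∃ kl ∈ q.coeff.support, kl.2 ⟨k, h1⟩ = l0v k q h1 h2 := by
  have hmem := Finset.min'_mem (q.coeff.support.image fun kl => kl.2 ⟨k, h1⟩)
    ((Finsupp.support_nonempty_iff.mpr (AddMonoidAlgebra.coeff_eq_zero.not.mpr h2)).image _)
  obtain ⟨kl, hkl, he⟩ := Finset.mem_image.mp hmem
  exact ⟨kl, hkl, he⟩

lemma n1v_mem {k : ℕ} {q : Lring n} (h1 : k < n) (h2 : q ≠ 0) :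
    ∃ kl ∈ q.coeff.support, kl.2 ⟨k, h1⟩ = n1v k q h1 h2 := by
  have hmem := Finset.max'_mem (q.coeff.support.image fun kl => kl.2 ⟨k, h1⟩)
    ((Finsupp.support_nonempty_iff.mpr (AddMonoidAlgebra.coeff_eq_zero.not.mpr h2)).image _)
  obtain ⟨kl, hkl, he⟩ := Finset.mem_image.mp hmem
  exact ⟨kl, hkl, he⟩

lemma regExp_zero (q : Lring n) : regExp n 0 q = 0 := rfl

lemma regExp_succ (k : ℕ) (q : Lring n) (h1 : k < n) (h2 : q ≠ 0) :
    regExp n (k+1) q =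
      (Pi.single (⟨k, h1⟩ : Fin n) (n0v k q h1 h2), Pi.single (⟨k, h1⟩ : Fin n) (l0v k q h1 h2)) +
        regExp n k (coeffAt n ⟨k, h1⟩ (n0v k q h1 h2) (n1v k q h1 h2) q) := by
  rw [regExp, dif_pos ⟨h1, h2⟩]
  rfl

lemma regExp_coord (k : ℕ) (q : Lring n) (j : Fin n) (hj : k ≤ (j : ℕ)) :
    (regExp n k q).1 j = 0 ∧ (regExp n k q).2 j = 0 := by
  induction k generalizing q with
  | zero => exact ⟨rfl, rfl⟩
  | succ k ih =>
    by_cases h : k < n ∧ q ≠ 0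
    · rw [regExp_succ k q h.1 h.2]
      have hne : j ≠ (⟨k, h.1⟩ : Fin n) := by
        intro he; rw [he] at hj; simp at hj
      have ihq := ih (coeffAt n ⟨k, h.1⟩ (n0v k q h.1 h.2) (n1v k q h.1 h.2) q) (by omega)
      refine ⟨?_, ?_⟩
      · simp only [Prod.fst_add, Pi.add_apply]
        rw [Pi.single_eq_of_ne hne, ihq.1, add_zero]
      · simp only [Prod.snd_add, Pi.add_apply]
        rw [Pi.single_eq_of_ne hne, ihq.2, add_zero]
    · rw [regExp, dif_neg h]
      exact ⟨rfl, rfl⟩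

lemma coeffAt_ne_zero {i : Fin n} {α β : ℤ} {p : Lring n} {w : (Fin n → ℤ) × (Fin n → ℤ)}
    (h : coeffAt n i α β p w ≠ 0) :
    w.1 i = 0 ∧ w.2 i = 0 ∧ p (update w.1 i α, update w.2 i β) ≠ 0 := by
  rw [coeffAt_apply] at h
  by_cases hw : w.1 i = 0 ∧ w.2 i = 0
  · rw [if_pos hw] at h; exact ⟨hw.1, hw.2, h⟩
  · rw [if_neg hw] at h; exact absurd rfl h

lemma lemmaA (k : ℕ) : ∀ (q : Lring n), k ≤ n → ∀ h2 : q ≠ 0,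
    ∀ (D : Fin n → ℤ), (∀ kl ∈ q.coeff.support, ∀ i : Fin n, kl.1 i + kl.2 i = D i) →
    (∀ kl ∈ q.coeff.support, ∀ i : Fin n, k ≤ (i : ℕ) → kl.1 i = 0 ∧ kl.2 i = 0) →
    IsReg n k (AddMonoidAlgebra.single (-(regExp n k q)) 1 * q) ∧
    ∀ j : Fin n, (regExp n k q).1 j + (regExp n k q).2 j ≤ D j := by
  induction k with
  | zero =>
    intro q _ h2 D hD hv
    have hq : AddMonoidAlgebra.single (-(regExp n 0 q)) (1 : Rring n) * q = q := by
      rw [regExp_zero, neg_zero, ← AddMonoidAlgebra.one_def, one_mul]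
    constructor
    · rw [hq]
      refine ⟨h2, fun kl hkl => ?_⟩
      have hz := hv kl hkl
      exact Prod.ext (funext fun j => (hz j (Nat.zero_le _)).1)
        (funext fun j => (hz j (Nat.zero_le _)).2)
    · intro j
      rw [regExp_zero]
      obtain ⟨kl, hkl⟩ := Finsupp.support_nonempty_iff.mpr (AddMonoidAlgebra.coeff_eq_zero.not.mpr h2)
      have h0 := hv kl hkl j (Nat.zero_le _)
      have hDj := hD kl hkl j
      rw [h0.1, h0.2] at hDj
      show (0:ℤ) + 0 ≤ D j
      omega
  | succ k ih =>
    intro q hkn h2 D hD hv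
    have h1 : k < n := hkn
    set i : Fin n := ⟨k, h1⟩ with hi
    have hik : (i : ℕ) = k := rfl
    set N0 := n0v k q h1 h2 with hN0
    set L0 := l0v k q h1 h2 with hL0
    set N1 := n1v k q h1 h2 with hN1v
    set B := coeffAt n i N0 N1 q with hBdef
    -- min/max facts
    have hN0le : ∀ kl ∈ q.coeff.support, N0 ≤ kl.1 i := fun kl hkl =>
      Finset.min'_le _ _ (Finset.mem_image_of_mem _ hkl)
    have hL0le : ∀ kl ∈ q.coeff.support, L0 ≤ kl.2 i := fun kl hkl =>
      Finset.min'_le _ _ (Finset.mem_image_of_mem _ hkl)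
    have hleN1 : ∀ kl ∈ q.coeff.support, kl.2 i ≤ N1 := fun kl hkl =>
      Finset.le_max' _ _ (Finset.mem_image_of_mem (fun kl => kl.2 i) hkl)
    obtain ⟨kl0, hkl0, hkl0x⟩ : ∃ kl ∈ q.coeff.support, kl.1 i = N0 := by
      have hmem := Finset.min'_mem (q.coeff.support.image fun kl => kl.1 i)
        ((Finsupp.support_nonempty_iff.mpr (AddMonoidAlgebra.coeff_eq_zero.not.mpr h2)).image _)
      obtain ⟨kl, hkl, he⟩ := Finset.mem_image.mp hmem
      exact ⟨kl, hkl, he⟩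
    have hkl0y : kl0.2 i = D i - N0 := by
      have := hD kl0 hkl0 i; omega
    have hN1eq : N1 = D i - N0 := by
      refine le_antisymm ?_ ?_
      · have hmem := Finset.max'_mem (q.coeff.support.image fun kl => kl.2 i)
          ((Finsupp.support_nonempty_iff.mpr (AddMonoidAlgebra.coeff_eq_zero.not.mpr h2)).image _)
        obtain ⟨kl, hkl, he⟩ := Finset.mem_image.mp hmem
        rw [show N1 = kl.2 i from he.symm]
        have := hD kl hkl i
        have := hN0le kl hkl
        omega
      · rw [← hkl0y]; exact hleN1 kl0 hkl0
    have hmge : 0 ≤ D i - N0 - L0 := by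
      have := hL0le kl0 hkl0; omega
    set m : ℕ := (D i - N0 - L0).toNat with hm
    have hmz : (m : ℤ) = D i - N0 - L0 := Int.toNat_of_nonneg hmge
    -- B is nonzero
    have hBne : B ≠ 0 := by
      intro hB0
      have : B (update kl0.1 i 0, update kl0.2 i 0) ≠ 0 := by
        rw [hBdef, coeffAt_apply]
        have e1 : update (update kl0.1 i 0) i N0 = kl0.1 := by
          rw [Function.update_idem, ← hkl0x, Function.update_eq_self]
        have e2 : update (update kl0.2 i 0) i N1 = kl0.2 := by
          rw [Function.update_idem, hN1eq, ← hkl0y, Function.update_eq_self]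
        rw [if_pos ⟨Function.update_self _ _ _, Function.update_self _ _ _⟩]
        simp only [e1, e2]
        exact Finsupp.mem_support_iff.mp hkl0
      rw [hB0] at this; exact this rfl
    -- support of B
    have hBsupp : ∀ w ∈ B.coeff.support, w.1 i = 0 ∧ w.2 i = 0 ∧
        (update w.1 i N0, update w.2 i N1) ∈ q.coeff.support := by
      intro w hw
      obtain ⟨a, b, c⟩ := coeffAt_ne_zero (Finsupp.mem_support_iff.mp hw)
      exact ⟨a, b, Finsupp.mem_support_iff.mpr c⟩
    have hBdeg : ∀ kl ∈ B.coeff.support, ∀ j : Fin n, kl.1 j + kl.2 j = Function.update D i 0 j := by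
      intro kl hkl j
      obtain ⟨a, b, c⟩ := hBsupp kl hkl
      rcases eq_or_ne j i with rfl | hj
      · rw [a, b, Function.update_self]; ring
      · rw [Function.update_of_ne hj]
        have h' : update kl.1 i N0 j + update kl.2 i N1 j = D j := hD _ c j
        rwa [Function.update_of_ne hj, Function.update_of_ne hj] at h'
    have hBvars : ∀ kl ∈ B.coeff.support, ∀ j : Fin n, k ≤ (j : ℕ) → kl.1 j = 0 ∧ kl.2 j = 0 := by
      intro kl hkl j hj
      obtain ⟨a, b, c⟩ := hBsupp kl hkl
      rcases eq_or_ne j i with rfl | hj'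
      · exact ⟨a, b⟩
      · have hj2 : k + 1 ≤ (j : ℕ) := by
          rcases Nat.lt_or_ge (j : ℕ) (k+1) with h | h
          · exfalso; exact hj' (Fin.ext (by omega))
          · exact h
        have h' : update kl.1 i N0 j = 0 ∧ update kl.2 i N1 j = 0 := hv _ c j hj2
        rwa [Function.update_of_ne hj', Function.update_of_ne hj'] at h'
    obtain ⟨regB, bndB⟩ := ih B (Nat.le_of_succ_le hkn) hBne (Function.update D i 0) hBdeg hBvars
    set r' := regExp n k B with hr'
    have hr'i : r'.1 i = 0 ∧ r'.2 i = 0 := regExp_coord k B i (le_refl k)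
    have hreq : regExp n (k+1) q = (Pi.single i N0, Pi.single i L0) + r' :=
      regExp_succ k q h1 h2
    set r := regExp n (k+1) q with hr
    have hr1 : ∀ j : Fin n, r.1 j = (Pi.single i N0 : Fin n → ℤ) j + r'.1 j := fun j => by
      rw [hreq]; rfl
    have hr2 : ∀ j : Fin n, r.2 j = (Pi.single i L0 : Fin n → ℤ) j + r'.2 j := fun j => by
      rw [hreq]; rfl
    set q' := AddMonoidAlgebra.single (-r) (1 : Rring n) * q with hq'
    have hq'app : ∀ w, q' w = q (r + w) := fun w => shift_apply r q w
    have hq'supp : ∀ w, w ∈ q'.coeff.support ↔ (r + w) ∈ q.coeff.support := by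
      intro w
      rw [Finsupp.mem_support_iff, Finsupp.mem_support_iff, hq'app]
    constructor
    · show IsReg n (k+1) q'
      refine ⟨?_, ?_, ?_⟩
      · -- variables beyond k+1 do not occur
        intro kl hkl j hj
        have hji : j ≠ i := by intro he; rw [he] at hj; simp [hi] at hj
        have hrj1 : r.1 j = 0 := by
          rw [hr1 j, Pi.single_eq_of_ne hji, (regExp_coord k B j (by omega)).1, add_zero]
        have hrj2 : r.2 j = 0 := by
          rw [hr2 j, Pi.single_eq_of_ne hji, (regExp_coord k B j (by omega)).2, add_zero]
        have := hv _ ((hq'supp kl).mp hkl) j hj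
        constructor
        · have h' := this.1
          rw [show (r + kl).1 j = r.1 j + kl.1 j from rfl, hrj1, zero_add] at h'
          exact h'
        · have h' := this.2
          rw [show (r + kl).2 j = r.2 j + kl.2 j from rfl, hrj2, zero_add] at h'
          exact h'
      · -- homogeneity
        refine ⟨fun j => D j - r.1 j - r.2 j, fun kl hkl => ?_⟩
        funext j
        have := hD _ ((hq'supp kl).mp hkl) j
        have e1 : (r + kl).1 j = r.1 j + kl.1 j := rfl
        have e2 : (r + kl).2 j = r.2 j + kl.2 j := rfl
        rw [e1, e2] at this
        show kl.1 j + kl.2 j = D j - r.1 j - r.2 j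
        omega
      · -- the polynomial conditions in the top pair of variables
        have hri1 : r.1 i = N0 := by
          rw [hr1 i, Pi.single_eq_same, hr'i.1, add_zero]
        have hri2 : r.2 i = L0 := by
          rw [hr2 i, Pi.single_eq_same, hr'i.2, add_zero]
        refine ⟨m, fun kl hkl j hj => ?_, fun j hj => ?_⟩
        · have hji : j = i := Fin.ext (by omega)
          subst hji
          have hmem := (hq'supp kl).mp hkl
          have e1 : (r + kl).1 i = r.1 i + kl.1 i := rfl
          have e2 : (r + kl).2 i = r.2 i + kl.2 i := rfl
          have b1 := hN0le _ hmem; rw [e1, hri1] at b1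
          have b2 := hL0le _ hmem; rw [e2, hri2] at b2
          have b3 := hD _ hmem i; rw [e1, e2, hri1, hri2] at b3
          refine ⟨by omega, by omega, by omega⟩
        · have hji : j = i := Fin.ext (by omega)
          subst hji
          have key : coeffAt n i 0 (m : ℤ) q' = AddMonoidAlgebra.single (-r') 1 * B := by
            refine AddMonoidAlgebra.ext <| Finsupp.ext fun w => ?_
            rw [shift_apply, hBdef]
            simp only [coeffAt_apply]
            have e1 : (r' + w).1 i = w.1 i := by
              show r'.1 i + w.1 i = w.1 i
              rw [hr'i.1, zero_add]
            have e2 : (r' + w).2 i = w.2 i := by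
              show r'.2 i + w.2 i = w.2 i
              rw [hr'i.2, zero_add]
            rw [e1, e2]
            by_cases hw : w.1 i = 0 ∧ w.2 i = 0
            · rw [if_pos hw, if_pos hw, hq'app]
              congr 1
              refine Prod.ext (funext fun j' => ?_) (funext fun j' => ?_)
              · show r.1 j' + update w.1 i 0 j' = update ((r' + w).1) i N0 j'
                rcases eq_or_ne j' i with rfl | hj'
                · rw [Function.update_self, Function.update_self, hri1, add_zero]
                · rw [Function.update_of_ne hj', Function.update_of_ne hj']
                  show r.1 j' + w.1 j' = r'.1 j' + w.1 j'
                  rw [hr1 j', Pi.single_eq_of_ne hj']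
                  ring
              · show r.2 j' + update w.2 i (m : ℤ) j' = update ((r' + w).2) i N1 j'
                rcases eq_or_ne j' i with rfl | hj'
                · rw [Function.update_self, Function.update_self, hri2]
                  show L0 + (m : ℤ) = N1
                  omega
                · rw [Function.update_of_ne hj', Function.update_of_ne hj']
                  show r.2 j' + w.2 j' = r'.2 j' + w.2 j'
                  rw [hr2 j', Pi.single_eq_of_ne hj']
                  ring
            · rw [if_neg hw, if_neg hw]
          rw [key]
          exact regB
    · -- the degree bound
      intro j
      rcases eq_or_ne j i with rfl | hj
      · rw [hr1 i, hr2 i, Pi.single_eq_same, Pi.single_eq_same, hr'i.1, hr'i.2]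
        omega
      · rw [hr1 j, hr2 j, Pi.single_eq_of_ne hj, Pi.single_eq_of_ne hj, zero_add, zero_add]
        have := bndB j
        rwa [Function.update_of_ne hj] at this

lemma der_coeffAt (k : ℕ) (h1 : k < n) (p : Lring n) (m : ℤ)
    (hv : ∀ kl ∈ p.coeff.support, ∀ j : Fin n, k + 1 ≤ (j : ℕ) → kl.1 j = 0 ∧ kl.2 j = 0)
    (hx : ∀ kl ∈ p.coeff.support, 0 ≤ kl.1 (⟨k, h1⟩ : Fin n)) :
    coeffAt n ⟨k, h1⟩ 0 m (der n p) = der n (coeffAt n ⟨k, h1⟩ 0 m p) := by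
  set i : Fin n := ⟨k, h1⟩ with hi
  have hik : (i : ℕ) = k := rfl
  set q0 := coeffAt n i 0 m p with hq0def
  -- support facts for q0
  have hq0supp : ∀ v : (Fin n → ℤ) × (Fin n → ℤ), q0 v ≠ 0 →
      v.1 i = 0 ∧ v.2 i = 0 ∧ (update v.1 i 0, update v.2 i m) ∈ p.coeff.support := by
    intro v hvne
    obtain ⟨a, b, c⟩ := coeffAt_ne_zero hvne
    exact ⟨a, b, Finsupp.mem_support_iff.mpr c⟩
  have hq0vars : ∀ v : (Fin n → ℤ) × (Fin n → ℤ), q0 v ≠ 0 → ∀ j : Fin n,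
      k + 1 ≤ (j : ℕ) → v.1 j = 0 ∧ v.2 j = 0 := by
    intro v hvne j hj
    obtain ⟨a, b, c⟩ := hq0supp v hvne
    have hji : j ≠ i := fun he => by rw [he, hik] at hj; omega
    have h' : update v.1 i 0 j = 0 ∧ update v.2 i m j = 0 := hv _ c j hj
    rwa [Function.update_of_ne hji, Function.update_of_ne hji] at h'
  refine AddMonoidAlgebra.ext <| Finsupp.ext fun w => ?_
  rw [coeffAt_apply]
  by_cases hw : w.1 i = 0 ∧ w.2 i = 0
  · rw [if_pos hw, der_apply, der_apply]
    set W : (Fin n → ℤ) × (Fin n → ℤ) := (update w.1 i 0, update w.2 i m) with hW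
    have hW1 : ∀ j : Fin n, j ≠ i → W.1 j = w.1 j := fun j hj => Function.update_of_ne hj _ _
    have hW2 : ∀ j : Fin n, j ≠ i → W.2 j = w.2 j := fun j hj => Function.update_of_ne hj _ _
    have hcomp : ∀ a : (Fin n → ℤ) × (Fin n → ℤ), a.1 i = 0 → a.2 i = 0 →
        q0 (w - a) = p (W - a) := by
      intro a ha1 ha2
      rw [hq0def, coeffAt_apply]
      rw [if_pos ⟨by show w.1 i - a.1 i = 0; rw [ha1, hw.1, sub_zero],
                  by show w.2 i - a.2 i = 0; rw [ha2, hw.2, sub_zero]⟩]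
      congr 1
      refine Prod.ext (funext fun j' => ?_) (funext fun j' => ?_)
      · show update (w.1 - a.1) i 0 j' = W.1 j' - a.1 j'
        rcases eq_or_ne j' i with rfl | hj'
        · rw [Function.update_self, ha1]
          show (0:ℤ) = update w.1 i 0 i - 0
          rw [Function.update_self, sub_zero]
        · rw [Function.update_of_ne hj', hW1 j' hj']
          rfl
      · show update (w.2 - a.2) i m j' = W.2 j' - a.2 j'
        rcases eq_or_ne j' i with rfl | hj'
        · rw [Function.update_self, ha2]
          show m = update w.2 i m i - 0
          rw [Function.update_self, sub_zero]
        · rw [Function.update_of_ne hj', hW2 j' hj']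
          rfl
    refine Finset.sum_congr rfl fun j _ => ?_
    rcases eq_or_ne j i with rfl | hji
    · -- the term i = i vanishes on both sides
      have S1 : W.1 i = 0 := Function.update_self _ _ _
      have S2 : p (W - (Pexp n i + Ej n i)) = 0 := by
        by_contra hne
        have h0 := hx _ (Finsupp.mem_support_iff.mpr hne)
        have : (W - (Pexp n i + Ej n i)).1 i = W.1 i - 1 := by
          show W.1 i - ((Pexp n i).1 i + (Ej n i).1 i) = W.1 i - 1
          rw [pexp_fst, ej_fst]; simp
        rw [this, S1] at h0; omega
      have T2 : q0 (w - (Pexp n i + Ej n i)) = 0 := by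
        by_contra hne
        have h0 := (hq0supp _ hne).2
        have : (w - (Pexp n i + Ej n i)).2 i = w.2 i + 1 := by
          show w.2 i - ((Pexp n i).2 i + (Ej n i).2 i) = w.2 i + 1
          rw [pexp_snd, ej_snd]; simp
        rw [this, hw.2] at h0; omega
      rw [S1, S2, T2, hw.1]
      simp
    · rcases Nat.lt_or_ge (j : ℕ) k with hjk | hjk
      · -- matching terms for j < k
        have hij : ¬ (i < j) := by rw [Fin.lt_def, hik]; omega
        have ha1 : (Pexp n j).1 i = 0 := by rw [pexp_fst, if_neg hij]
        have ha2 : (Pexp n j).2 i = 0 := by rw [pexp_snd, if_neg hij]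
        have hb1 : (Pexp n j + Ej n j).1 i = 0 := by
          show (Pexp n j).1 i + (Ej n j).1 i = 0
          rw [ha1, ej_fst, if_neg (Ne.symm hji), add_zero]
        have hb2 : (Pexp n j + Ej n j).2 i = 0 := by
          show (Pexp n j).2 i + (Ej n j).2 i = 0
          rw [ha2, ej_snd, if_neg (Ne.symm hji), add_zero]
        rw [hcomp _ ha1 ha2, hcomp _ hb1 hb2, hW1 j hji, hW2 j hji]
      · -- terms with j > k vanish on both sides
        have hjk' : k + 1 ≤ (j : ℕ) := by
          rcases Nat.lt_or_ge (j:ℕ) (k+1) with h | h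
          · exfalso; exact hji (Fin.ext (by omega))
          · exact h
        have S1 : W.1 j • (Dl n ((j : ℕ) + 1) * p (W - Pexp n j)) = 0 := by
          by_cases hne : p (W - Pexp n j) = 0
          · rw [hne, mul_zero, smul_zero]
          · have h0 := (hv _ (Finsupp.mem_support_iff.mpr hne) j hjk').1
            have e : (W - Pexp n j).1 j = W.1 j := by
              show W.1 j - (Pexp n j).1 j = W.1 j
              rw [pexp_fst]; simp
            rw [e] at h0; rw [h0, zero_smul]
        have S2 : (W.2 j + 1) • (Dl n ((j : ℕ) + 1) * p (W - (Pexp n j + Ej n j))) = 0 := by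
          by_cases hne : p (W - (Pexp n j + Ej n j)) = 0
          · rw [hne, mul_zero, smul_zero]
          · have h0 := (hv _ (Finsupp.mem_support_iff.mpr hne) j hjk').2
            have e : (W - (Pexp n j + Ej n j)).2 j = W.2 j + 1 := by
              show W.2 j - ((Pexp n j).2 j + (Ej n j).2 j) = W.2 j + 1
              rw [pexp_snd, ej_snd]; simp
            rw [e] at h0
            rw [show W.2 j + 1 = 0 from by omega, zero_smul]
        have T1 : w.1 j • (Dl n ((j : ℕ) + 1) * q0 (w - Pexp n j)) = 0 := by
          by_cases hne : q0 (w - Pexp n j) = 0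
          · rw [hne, mul_zero, smul_zero]
          · have h0 := (hq0vars _ hne j hjk').1
            have e : (w - Pexp n j).1 j = w.1 j := by
              show w.1 j - (Pexp n j).1 j = w.1 j
              rw [pexp_fst]; simp
            rw [e] at h0; rw [h0, zero_smul]
        have T2 : (w.2 j + 1) • (Dl n ((j : ℕ) + 1) * q0 (w - (Pexp n j + Ej n j))) = 0 := by
          by_cases hne : q0 (w - (Pexp n j + Ej n j)) = 0
          · rw [hne, mul_zero, smul_zero]
          · have h0 := (hq0vars _ hne j hjk').2
            have e : (w - (Pexp n j + Ej n j)).2 j = w.2 j + 1 := by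
              show w.2 j - ((Pexp n j).2 j + (Ej n j).2 j) = w.2 j + 1
              rw [pexp_snd, ej_snd]; simp
            rw [e] at h0
            rw [show w.2 j + 1 = 0 from by omega, zero_smul]
        rw [S1, S2, T1, T2]
  · -- outside the support in the variables (x_i, y_i): both sides vanish
    rw [if_neg hw]
    symm
    rw [der_apply]
    refine Finset.sum_eq_zero fun j _ => ?_
    have key : ∀ a : (Fin n → ℤ) × (Fin n → ℤ), a.1 i = 0 → a.2 i = 0 →
        q0 (w - a) = 0 := by
      intro a ha1 ha2
      by_contra hne
      obtain ⟨c1, c2, -⟩ := hq0supp _ hne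
      apply hw
      constructor
      · have : w.1 i - a.1 i = 0 := c1
        rw [ha1] at this; omega
      · have : w.2 i - a.2 i = 0 := c2
        rw [ha2] at this; omega
    rcases eq_or_ne j i with rfl | hji
    · -- i = i
      have T1 : w.1 i • (Dl n ((i : ℕ) + 1) * q0 (w - Pexp n i)) = 0 := by
        by_cases hne : q0 (w - Pexp n i) = 0
        · rw [hne, mul_zero, smul_zero]
        · have h0 := (hq0supp _ hne).1
          have e : (w - Pexp n i).1 i = w.1 i := by
            show w.1 i - (Pexp n i).1 i = w.1 i
            rw [pexp_fst]; simp
          rw [e] at h0; rw [h0, zero_smul]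
      have T2 : (w.2 i + 1) • (Dl n ((i : ℕ) + 1) * q0 (w - (Pexp n i + Ej n i))) = 0 := by
        by_cases hne : q0 (w - (Pexp n i + Ej n i)) = 0
        · rw [hne, mul_zero, smul_zero]
        · have h0 := (hq0supp _ hne).2.1
          have e : (w - (Pexp n i + Ej n i)).2 i = w.2 i + 1 := by
            show w.2 i - ((Pexp n i).2 i + (Ej n i).2 i) = w.2 i + 1
            rw [pexp_snd, ej_snd]; simp
          rw [e] at h0
          rw [show w.2 i + 1 = 0 from by omega, zero_smul]
      rw [T1, T2, add_zero]
    · rcases Nat.lt_or_ge (j : ℕ) k with hjk | hjk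
      · have hij : ¬ (i < j) := by rw [Fin.lt_def, hik]; omega
        have ha1 : (Pexp n j).1 i = 0 := by rw [pexp_fst, if_neg hij]
        have ha2 : (Pexp n j).2 i = 0 := by rw [pexp_snd, if_neg hij]
        have hb1 : (Pexp n j + Ej n j).1 i = 0 := by
          show (Pexp n j).1 i + (Ej n j).1 i = 0
          rw [ha1, ej_fst, if_neg (Ne.symm hji), add_zero]
        have hb2 : (Pexp n j + Ej n j).2 i = 0 := by
          show (Pexp n j).2 i + (Ej n j).2 i = 0
          rw [ha2, ej_snd, if_neg (Ne.symm hji), add_zero]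
        rw [key _ ha1 ha2, key _ hb1 hb2]
        simp
      · have hjk' : k + 1 ≤ (j : ℕ) := by
          rcases Nat.lt_or_ge (j:ℕ) (k+1) with h | h
          · exfalso; exact hji (Fin.ext (by omega))
          · exact h
        have T1 : w.1 j • (Dl n ((j : ℕ) + 1) * q0 (w - Pexp n j)) = 0 := by
          by_cases hne : q0 (w - Pexp n j) = 0
          · rw [hne, mul_zero, smul_zero]
          · have h0 := (hq0vars _ hne j hjk').1
            have e : (w - Pexp n j).1 j = w.1 j := by
              show w.1 j - (Pexp n j).1 j = w.1 j
              rw [pexp_fst]; simp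
            rw [e] at h0; rw [h0, zero_smul]
        have T2 : (w.2 j + 1) • (Dl n ((j : ℕ) + 1) * q0 (w - (Pexp n j + Ej n j))) = 0 := by
          by_cases hne : q0 (w - (Pexp n j + Ej n j)) = 0
          · rw [hne, mul_zero, smul_zero]
          · have h0 := (hq0vars _ hne j hjk').2
            have e : (w - (Pexp n j + Ej n j)).2 j = w.2 j + 1 := by
              show w.2 j - ((Pexp n j).2 j + (Ej n j).2 j) = w.2 j + 1
              rw [pexp_snd, ej_snd]; simp
            rw [e] at h0
            rw [show w.2 j + 1 = 0 from by omega, zero_smul]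
        rw [T1, T2, add_zero]

lemma mainLemma (k : ℕ) : ∀ p : Lring n, k ≤ n → IsReg n k p → der n p ≠ 0 →
    ∃ i : Fin n, (i : ℕ) < k ∧
      1 ≤ (regExp n k (der n p)).1 i + (regExp n k (der n p)).2 i ∧
      ∀ j : Fin n, (i : ℕ) < (j : ℕ) →
        (regExp n k (der n p)).1 j + (regExp n k (der n p)).2 j = 0 := by
  induction k with
  | zero =>
    intro p _ hreg hder
    exact absurd (der_eq_zero_of_const hreg.2) hder
  | succ k ih =>
    intro p hkn hreg hder
    have h1 : k < n := hkn
    set i : Fin n := ⟨k, h1⟩ with hi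
    have hik : (i : ℕ) = k := rfl
    obtain ⟨hv, -, m, hm, hq0reg⟩ := hreg
    set q0 := coeffAt n i 0 (m : ℤ) p with hq0def
    have hq0 : IsReg n k q0 := hq0reg i rfl
    -- support facts for `der p` at the index `i`
    have hds : ∀ w : (Fin n → ℤ) × (Fin n → ℤ), der n p w ≠ 0 →
        0 ≤ w.1 i ∧ 0 ≤ w.2 i ∧ w.1 i + w.2 i = (m : ℤ) := by
      intro w hw
      obtain ⟨kl, hkl, j, hj⟩ := der_support hw
      have hklm := hm kl (Finsupp.mem_support_iff.mpr hkl) i rfl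
      rcases hj with ⟨rfl, hc⟩ | ⟨rfl, hc⟩
      · have hjk : ¬ (k + 1 ≤ (j : ℕ)) := fun h =>
          hc (hv kl (Finsupp.mem_support_iff.mpr hkl) j h).1
        have hij : ¬ (i < j) := by rw [Fin.lt_def, hik]; omega
        have e1 : (kl + Pexp n j).1 i = kl.1 i := by
          show kl.1 i + (Pexp n j).1 i = kl.1 i
          rw [pexp_fst, if_neg hij, add_zero]
        have e2 : (kl + Pexp n j).2 i = kl.2 i := by
          show kl.2 i + (Pexp n j).2 i = kl.2 i
          rw [pexp_snd, if_neg hij, add_zero]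
        rw [e1, e2]
        exact hklm
      · have hjk : ¬ (k + 1 ≤ (j : ℕ)) := fun h =>
          hc (hv kl (Finsupp.mem_support_iff.mpr hkl) j h).2
        have hij : ¬ (i < j) := by rw [Fin.lt_def, hik]; omega
        rcases eq_or_ne j i with rfl | hji
        · have hy := (hm kl (Finsupp.mem_support_iff.mpr hkl) i rfl).2.1
          have e1 : (kl + (Pexp n i + Ej n i)).1 i = kl.1 i + 1 := by
            show kl.1 i + ((Pexp n i).1 i + (Ej n i).1 i) = kl.1 i + 1
            rw [pexp_fst, ej_fst]; simp
          have e2 : (kl + (Pexp n i + Ej n i)).2 i = kl.2 i - 1 := by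
            show kl.2 i + ((Pexp n i).2 i + (Ej n i).2 i) = kl.2 i - 1
            rw [pexp_snd, ej_snd]; simp; ring
          rw [e1, e2]
          have hm' := hm kl (Finsupp.mem_support_iff.mpr hkl) i rfl
          refine ⟨by omega, ?_, by omega⟩
          have : kl.2 i ≠ 0 := hc
          omega
        · have e1 : (kl + (Pexp n j + Ej n j)).1 i = kl.1 i := by
            show kl.1 i + ((Pexp n j).1 i + (Ej n j).1 i) = kl.1 i
            rw [pexp_fst, if_neg hij, ej_fst, if_neg (Ne.symm hji)]; ring
          have e2 : (kl + (Pexp n j + Ej n j)).2 i = kl.2 i := by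
            show kl.2 i + ((Pexp n j).2 i + (Ej n j).2 i) = kl.2 i
            rw [pexp_snd, if_neg hij, ej_snd, if_neg (Ne.symm hji)]; ring
          rw [e1, e2]
          exact hklm
    set N0 := n0v k (der n p) h1 hder with hN0def
    set L0 := l0v k (der n p) h1 hder with hL0def
    set N1 := n1v k (der n p) h1 hder with hN1def
    have hreq : regExp n (k+1) (der n p) =
        (Pi.single i N0, Pi.single i L0) + regExp n k (coeffAt n i N0 N1 (der n p)) :=
      regExp_succ k (der n p) h1 hder
    have hN0le : ∀ kl ∈ (der n p).coeff.support, N0 ≤ kl.1 i := fun kl hkl =>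
      n0v_le h1 hder hkl
    have hL0le : ∀ kl ∈ (der n p).coeff.support, L0 ≤ kl.2 i := fun kl hkl =>
      l0v_le h1 hder hkl
    have hleN1 : ∀ kl ∈ (der n p).coeff.support, kl.2 i ≤ N1 := fun kl hkl =>
      le_n1v h1 hder hkl
    obtain ⟨kl0, hkl0, hkl0x⟩ : ∃ kl ∈ (der n p).coeff.support, kl.1 i = N0 := n0v_mem h1 hder
    have hN0ge : 0 ≤ N0 := by
      rw [← hkl0x]
      exact (hds kl0 (Finsupp.mem_support_iff.mp hkl0)).1
    have hL0ge : 0 ≤ L0 := by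
      obtain ⟨kl, hkl, he⟩ := l0v_mem h1 hder
      replace he : kl.2 i = L0 := he
      rw [← he]
      exact (hds kl (Finsupp.mem_support_iff.mp hkl)).2.1
    by_cases hcase : 1 ≤ N0 + L0
    · refine ⟨i, by omega, ?_, ?_⟩
      · rw [hreq]
        have hri := regExp_coord k (coeffAt n i N0 N1 (der n p)) i (le_of_eq hik.symm)
        have e1 : ((Pi.single i N0, Pi.single i L0) +
            regExp n k (coeffAt n i N0 N1 (der n p))).1 i = N0 := by
          show (Pi.single i N0 : Fin n → ℤ) i + _ = N0
          rw [Pi.single_eq_same, hri.1, add_zero]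
        have e2 : ((Pi.single i N0, Pi.single i L0) +
            regExp n k (coeffAt n i N0 N1 (der n p))).2 i = L0 := by
          show (Pi.single i L0 : Fin n → ℤ) i + _ = L0
          rw [Pi.single_eq_same, hri.2, add_zero]
        rw [e1, e2]
        exact hcase
      · intro j hj
        rw [hreq]
        have hji : j ≠ i := fun he => by rw [he] at hj; omega
        have hrj := regExp_coord k (coeffAt n i N0 N1 (der n p)) j (by omega)
        have e1 : ((Pi.single i N0, Pi.single i L0) +
            regExp n k (coeffAt n i N0 N1 (der n p))).1 j = 0 := by
          show (Pi.single i N0 : Fin n → ℤ) j + _ = 0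
          rw [Pi.single_eq_of_ne hji, hrj.1, add_zero]
        have e2 : ((Pi.single i N0, Pi.single i L0) +
            regExp n k (coeffAt n i N0 N1 (der n p))).2 j = 0 := by
          show (Pi.single i L0 : Fin n → ℤ) j + _ = 0
          rw [Pi.single_eq_of_ne hji, hrj.2, add_zero]
        rw [e1, e2, add_zero]
    · -- the case `N0 = L0 = 0`: recurse on `q0`
      have hN0 : N0 = 0 := by omega
      have hL0 : L0 = 0 := by omega
      have hN1 : N1 = (m : ℤ) := by
        refine le_antisymm ?_ ?_
        · obtain ⟨kl, hkl, he⟩ := n1v_mem h1 hder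
          replace he : kl.2 i = N1 := he
          rw [← he]
          have := hds kl (Finsupp.mem_support_iff.mp hkl)
          omega
        · have h0 := hds kl0 (Finsupp.mem_support_iff.mp hkl0)
          have := hleN1 kl0 hkl0
          omega
      have hB : coeffAt n i N0 N1 (der n p) = der n q0 := by
        rw [hN0, hN1, hq0def, hi]
        exact der_coeffAt k h1 p (m : ℤ) hv
          (fun kl hkl => (hm kl hkl ⟨k, h1⟩ rfl).1)
      have hBne : coeffAt n i N0 N1 (der n p) ≠ 0 := by
        intro hB0
        have hkl0y : kl0.2 i = N1 := by
          have := hds kl0 (Finsupp.mem_support_iff.mp hkl0)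
          omega
        have : coeffAt n i N0 N1 (der n p) (update kl0.1 i 0, update kl0.2 i 0) ≠ 0 := by
          rw [coeffAt_apply]
          have e1 : update (update kl0.1 i 0) i N0 = kl0.1 := by
            rw [Function.update_idem, ← hkl0x, Function.update_eq_self]
          have e2 : update (update kl0.2 i 0) i N1 = kl0.2 := by
            rw [Function.update_idem, ← hkl0y, Function.update_eq_self]
          rw [if_pos ⟨Function.update_self _ _ _, Function.update_self _ _ _⟩]
          simp only [e1, e2]
          exact Finsupp.mem_support_iff.mp hkl0
        rw [hB0] at this
        exact this rfl
      have hderq0 : der n q0 ≠ 0 := by rw [← hB]; exact hBne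
      obtain ⟨i', hi'k, hi'1, hi'0⟩ := ih q0 (Nat.le_of_succ_le hkn) hq0 hderq0
      rw [← hB] at hi'1 hi'0
      refine ⟨i', by omega, ?_, ?_⟩
      · rw [hreq]
        have e1 : ((Pi.single i N0, Pi.single i L0) +
            regExp n k (coeffAt n i N0 N1 (der n p))).1 i' =
            (regExp n k (coeffAt n i N0 N1 (der n p))).1 i' := by
          show (Pi.single i N0 : Fin n → ℤ) i' + _ = _
          rw [hN0]
          simp [Pi.single_apply]
        have e2 : ((Pi.single i N0, Pi.single i L0) +
            regExp n k (coeffAt n i N0 N1 (der n p))).2 i' =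
            (regExp n k (coeffAt n i N0 N1 (der n p))).2 i' := by
          show (Pi.single i L0 : Fin n → ℤ) i' + _ = _
          rw [hL0]
          simp [Pi.single_apply]
        rw [e1, e2]
        exact hi'1
      · intro j hj
        rw [hreq]
        have e1 : ((Pi.single i N0, Pi.single i L0) +
            regExp n k (coeffAt n i N0 N1 (der n p))).1 j =
            (regExp n k (coeffAt n i N0 N1 (der n p))).1 j := by
          show (Pi.single i N0 : Fin n → ℤ) j + _ = _
          rw [hN0]
          simp [Pi.single_apply]
        have e2 : ((Pi.single i N0, Pi.single i L0) +
            regExp n k (coeffAt n i N0 N1 (der n p))).2 j =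
            (regExp n k (coeffAt n i N0 N1 (der n p))).2 j := by
          show (Pi.single i L0 : Fin n → ℤ) j + _ = _
          rw [hL0]
          simp [Pi.single_apply]
        rw [e1, e2]
        exact hi'0 j hj

end Statement5Aux


/-- If `p ∈ 𝕃ₙ^reg` (with `pdeg p = d ∈ ℕⁿ`), then either `∂p = 0` or
`q = ∂p / reg(∂p)` is `n`-regular with `pdeg q <_rlex pdeg p`. -/
theorem statement5 (n : ℕ) (hn : 1 ≤ n) (p : Lring n)
    (hreg : Panazzolo.IsReg n n p) (d : Fin n → ℕ)
    (hd : ∀ kl ∈ p.coeff.support, ∀ i : Fin n, kl.1 i + kl.2 i = (d i : ℤ)) :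
    Panazzolo.der n p = 0 ∨
      (Panazzolo.IsReg n n (Panazzolo.divreg n (Panazzolo.der n p)) ∧
        ∃ d' : Fin n → ℕ,
          (∀ kl ∈ (Panazzolo.divreg n (Panazzolo.der n p)).coeff.support, ∀ i : Fin n,
            kl.1 i + kl.2 i = (d' i : ℤ)) ∧
          Panazzolo.rlexLt n d' d) := by
  classical
  by_cases hder : Panazzolo.der n p = 0
  · exact Or.inl hder
  right
  have hD : ∀ kl ∈ (Panazzolo.der n p).coeff.support, ∀ i : Fin n,
      kl.1 i + kl.2 i = ((fun i => (d i : ℤ)) i) := Statement5Aux.der_deg hd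
  have hvars : ∀ kl ∈ (Panazzolo.der n p).coeff.support, ∀ i : Fin n,
      n ≤ (i : ℕ) → kl.1 i = 0 ∧ kl.2 i = 0 :=
    fun kl _ i hi => absurd i.isLt (by omega)
  obtain ⟨hregq, hbnd⟩ :=
    Statement5Aux.lemmaA n (Panazzolo.der n p) le_rfl hder (fun i => (d i : ℤ)) hD hvars
  set r := Panazzolo.regExp n n (Panazzolo.der n p) with hr
  have hdiv : Panazzolo.divreg n (Panazzolo.der n p) =
      AddMonoidAlgebra.single (-r) 1 * Panazzolo.der n p := rfl
  refine ⟨by rw [hdiv]; exact hregq, ?_⟩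
  obtain ⟨i0, hi0n, hi01, hi00⟩ := Statement5Aux.mainLemma n p le_rfl hreg hder
  rw [← hr] at hi01 hi00
  refine ⟨fun j => ((d j : ℤ) - r.1 j - r.2 j).toNat, ?_, ?_⟩
  · intro kl hkl j
    have hmem : (r + kl) ∈ (Panazzolo.der n p).coeff.support := by
      rw [Finsupp.mem_support_iff] at hkl ⊢
      rwa [hdiv, Statement5Aux.shift_apply] at hkl
    have h1 := hD _ hmem j
    have e1 : (r + kl).1 j = r.1 j + kl.1 j := rfl
    have e2 : (r + kl).2 j = r.2 j + kl.2 j := rfl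
    rw [e1, e2] at h1
    have hb := hbnd j
    simp only at h1 hb ⊢
    omega
  · refine ⟨i0, ?_, ?_⟩
    · intro j hj
      have h0 := hi00 j hj
      simp only
      omega
    · have hb := hbnd i0
      simp only at hb ⊢
      omega
end
end

section
/- Fix n ≥ 1, b > 0 and (a,r) ∈ ℝ^{2n} with I(a,r) nonempty, and let φ(x) = g_n(x) − b·x on I(a,r). Then for all x ∈ I(a,r), x²·φ''(x) = (f_1(x)⋯f_n(x))/(g_1(x)⋯g_{n−1}(x))² · δ_n · Σ_{j=1}^{n} (δ_j − δ_{j−1}) · (Π_{i=1}^{j−1} f_i(x)) · (Π_{i=j}^{n−1} g_i(x)), where δ_0 = 1 and δ_j = r_1⋯r_j. -/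
open scoped BigOperators

noncomputable section

namespace Statement10Aux

open Panazzolo Finset Filter

/-- First derivative of `gfun`. -/
def Gd (a r : ℕ → ℝ) : ℕ → ℝ → ℝ
  | 0 => fun _ => 1
  | (i+1) => fun x => r (i+1) * gfun a r i x ^ (r (i+1) - 1) * Gd a r i x

/-- Second derivative of `gfun`. -/
def Gd2 (a r : ℕ → ℝ) : ℕ → ℝ → ℝ
  | 0 => fun _ => 0
  | (i+1) => fun x =>
      r (i+1) * ((r (i+1) - 1) * gfun a r i x ^ (r (i+1) - 2) * Gd a r i x * Gd a r i x
        + gfun a r i x ^ (r (i+1) - 1) * Gd2 a r i x)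

lemma hasDerivAt_gfun {n : ℕ} {a r : ℕ → ℝ} {x : ℝ} (hx : x ∈ Iset n a r) :
    ∀ m ≤ n, HasDerivAt (gfun a r m) (Gd a r m x) x := by
  intro m
  induction m with
  | zero => intro _; simpa [gfun, Gd] using hasDerivAt_id' x
  | succ m ih =>
      intro hm
      have hg := ih (by omega)
      have hpos : 0 < gfun a r m x := hx m (by omega)
      have h := (hg.rpow_const (p := r (m+1)) (Or.inl hpos.ne')).const_add (a (m+1))
      rw [show gfun a r (m+1) = fun y => a (m+1) + gfun a r m y ^ r (m+1) from rfl]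
      rw [show Gd a r (m+1) x = Gd a r m x * r (m+1) * gfun a r m x ^ (r (m+1) - 1) from by
        simp [Gd]; ring]
      exact h

lemma hasDerivAt_Gd {n : ℕ} {a r : ℕ → ℝ} {x : ℝ} (hx : x ∈ Iset n a r) :
    ∀ m ≤ n, HasDerivAt (Gd a r m) (Gd2 a r m x) x := by
  intro m
  induction m with
  | zero => intro _; simpa [Gd, Gd2] using hasDerivAt_const x (1:ℝ)
  | succ m ih =>
      intro hm
      have hpos : 0 < gfun a r m x := hx m (by omega)
      have h1 := (hasDerivAt_gfun hx m (by omega)).rpow_const (p := r (m+1) - 1)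
        (Or.inl hpos.ne')
      have h2 := (h1.const_mul (r (m+1))).mul (ih (by omega))
      rw [show Gd a r (m+1) = fun y => r (m+1) * gfun a r m y ^ (r (m+1) - 1) * Gd a r m y
        from rfl]
      rw [show Gd2 a r (m+1) x
          = r (m+1) * (Gd a r m x * (r (m+1) - 1) * gfun a r m x ^ (r (m+1) - 1 - 1))
              * Gd a r m x
            + r (m+1) * gfun a r m x ^ (r (m+1) - 1) * Gd2 a r m x from by
        rw [show r (m+1) - 1 - 1 = r (m+1) - 2 from by ring]; simp [Gd2]; ring]
      exact h2

lemma eventually_Iset {n : ℕ} {a r : ℕ → ℝ} {x : ℝ} (hx : x ∈ Iset n a r) :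
    ∀ᶠ y in nhds x, y ∈ Iset n a r := by
  have h : ∀ i ∈ Finset.range (n+1), ∀ᶠ y in nhds x, 0 < gfun a r i y := by
    intro i hi
    rw [Finset.mem_range] at hi
    exact ((hasDerivAt_gfun hx i (by omega)).continuousAt).eventually
      (lt_mem_nhds (hx i (by omega)))
  have h2 := (eventually_all_finset (Finset.range (n+1))).2 h
  filter_upwards [h2] with y hy i hi
  exact hy i (Finset.mem_range.mpr (by omega))

lemma xGd {n : ℕ} {a r : ℕ → ℝ} {x : ℝ} (hx : x ∈ Iset n a r) :
    ∀ m, m + 1 ≤ n →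
      x * (∏ i ∈ Icc 1 m, gfun a r i x) * Gd a r (m+1) x
        = delta r (m+1) * ∏ i ∈ Icc 1 (m+1), ffun a r i x := by
  intro m
  induction m with
  | zero =>
      intro _
      have hx0 : 0 < x := hx 0 (by omega)
      have h1 : x ^ (r 1 - 1) * x = x ^ r 1 := by
        rw [← Real.rpow_add_one hx0.ne']; ring_nf
      simp only [Gd, gfun, ffun, delta, Finset.Icc_self, Finset.prod_singleton,
        show Finset.Icc 1 0 = (∅ : Finset ℕ) from rfl, Finset.prod_empty]
      linear_combination r 1 * h1
  | succ m ih =>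
      intro hm
      have hg : 0 < gfun a r (m+1) x := hx (m+1) (by omega)
      have h1 := ih (by omega)
      have A1 : gfun a r (m+1) x ^ (r (m+2) - 1) * gfun a r (m+1) x = ffun a r (m+2) x := by
        rw [← Real.rpow_add_one hg.ne', show r (m+2) - 1 + 1 = r (m+2) from by ring]; rfl
      rw [Finset.prod_Icc_succ_top (by omega : 1 ≤ m + 1),
        show delta r (m+2) = delta r (m+1) * r (m+2) from
          Finset.prod_Icc_succ_top (by omega) r,
        Finset.prod_Icc_succ_top (by omega : 1 ≤ m + 2),
        show Gd a r (m+2) x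
          = r (m+2) * gfun a r (m+1) x ^ (r (m+2) - 1) * Gd a r (m+1) x from rfl]
      linear_combination
        (r (m+2) * gfun a r (m+1) x ^ (r (m+2) - 1) * gfun a r (m+1) x) * h1
        + (delta r (m+1) * r (m+2) * (∏ i ∈ Icc 1 (m+1), ffun a r i x)) * A1

lemma key {n : ℕ} {a r : ℕ → ℝ} {x : ℝ} (hx : x ∈ Iset n a r) :
    ∀ m, m + 1 ≤ n →
      x ^ 2 * Gd2 a r (m+1) x
        = ((∏ i ∈ Icc 1 (m+1), ffun a r i x) / (∏ i ∈ Icc 1 m, gfun a r i x) ^ 2) *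
          (delta r (m+1) *
            ∑ j ∈ Icc 1 (m+1), (delta r j - delta r (j-1)) *
              (∏ i ∈ Icc 1 (j-1), ffun a r i x) * (∏ i ∈ Icc j m, gfun a r i x)) := by
  intro m
  induction m with
  | zero =>
      intro _
      have hx0 : 0 < x := hx 0 (by omega)
      have h2 : x ^ (r 1 - 2) * x ^ 2 = x ^ r 1 := by
        rw [← Real.rpow_natCast x 2, ← Real.rpow_add hx0]; norm_num
      simp only [Gd2, Gd, gfun, ffun, delta, Finset.Icc_self, Finset.prod_singleton,
        show Finset.Icc 1 0 = (∅ : Finset ℕ) from rfl, Finset.prod_empty,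
        Finset.sum_singleton]
      push_cast
      linear_combination (r 1 * (r 1 - 1)) * h2
  | succ m ih =>
      intro hm
      have hx0 : 0 < x := hx 0 (by omega)
      have hg : 0 < gfun a r (m+1) x := hx (m+1) (by omega)
      have hG : 0 < ∏ i ∈ Icc 1 m, gfun a r i x :=
        Finset.prod_pos fun i hi => hx i (by rw [Finset.mem_Icc] at hi; omega)
      have IH := ih (by omega)
      have E1 := xGd hx m (by omega)
      have A1 : gfun a r (m+1) x ^ (r (m+2) - 1) * gfun a r (m+1) x = ffun a r (m+2) x := by
        rw [← Real.rpow_add_one hg.ne', show r (m+2) - 1 + 1 = r (m+2) from by ring]; rfl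
      have A2 : gfun a r (m+1) x ^ (r (m+2) - 2) * gfun a r (m+1) x ^ 2
          = ffun a r (m+2) x := by
        rw [← Real.rpow_natCast (gfun a r (m+1) x) 2, ← Real.rpow_add hg,
          show r (m+2) - 2 + ((2:ℕ):ℝ) = r (m+2) from by push_cast; ring]; rfl
      have E2 : x ^ 2 * Gd2 a r (m+1) x * (∏ i ∈ Icc 1 m, gfun a r i x) ^ 2
          = (∏ i ∈ Icc 1 (m+1), ffun a r i x) *
            (delta r (m+1) *
              ∑ j ∈ Icc 1 (m+1), (delta r j - delta r (j-1)) *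
                (∏ i ∈ Icc 1 (j-1), ffun a r i x) * (∏ i ∈ Icc j m, gfun a r i x)) := by
        rw [IH]; field_simp
      have hsum : (∑ j ∈ Icc 1 (m+2), (delta r j - delta r (j-1)) *
              (∏ i ∈ Icc 1 (j-1), ffun a r i x) * (∏ i ∈ Icc j (m+1), gfun a r i x))
          = (∑ j ∈ Icc 1 (m+1), (delta r j - delta r (j-1)) *
              (∏ i ∈ Icc 1 (j-1), ffun a r i x) * (∏ i ∈ Icc j m, gfun a r i x))
              * gfun a r (m+1) x
            + (delta r (m+2) - delta r (m+1)) * ∏ i ∈ Icc 1 (m+1), ffun a r i x := by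
        rw [Finset.sum_Icc_succ_top (by omega : 1 ≤ m + 2), Finset.sum_mul]
        congr 1
        · refine Finset.sum_congr rfl fun j hj => ?_
          rw [Finset.mem_Icc] at hj
          rw [Finset.prod_Icc_succ_top (by omega : j ≤ m + 1), ← mul_assoc]
        · rw [show m + 2 - 1 = m + 1 from rfl, Finset.Icc_eq_empty (by omega : ¬ m + 2 ≤ m + 1),
            Finset.prod_empty, mul_one]
      have E3 : (∏ i ∈ Icc 1 (m+1), ffun a r i x) * ffun a r (m+2) x /
            ((∏ i ∈ Icc 1 m, gfun a r i x) * gfun a r (m+1) x) ^ 2 *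
            ((∏ i ∈ Icc 1 m, gfun a r i x) * gfun a r (m+1) x) ^ 2
          = (∏ i ∈ Icc 1 (m+1), ffun a r i x) * ffun a r (m+2) x :=
        div_mul_cancel₀ _ (by positivity)
      rw [hsum,
        Finset.prod_Icc_succ_top (by omega : 1 ≤ m + 2) (fun i => ffun a r i x),
        Finset.prod_Icc_succ_top (by omega : 1 ≤ m + 1) (fun i => gfun a r i x),
        show delta r (m+2) = delta r (m+1) * r (m+2) from
          Finset.prod_Icc_succ_top (by omega) r,
        show Gd2 a r (m+2) x
          = r (m+2) * ((r (m+2) - 1) * gfun a r (m+1) x ^ (r (m+2) - 2)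
              * Gd a r (m+1) x * Gd a r (m+1) x
            + gfun a r (m+1) x ^ (r (m+2) - 1) * Gd2 a r (m+1) x) from rfl]
      refine mul_right_cancel₀
        (pow_ne_zero 2 (mul_ne_zero hG.ne' hg.ne') :
          ((∏ i ∈ Icc 1 m, gfun a r i x) * gfun a r (m+1) x) ^ 2 ≠ 0) ?_
      linear_combination
        (r (m+2) * (r (m+2) - 1) * Gd a r (m+1) x ^ 2 * x ^ 2 *
          (∏ i ∈ Icc 1 m, gfun a r i x) ^ 2) * A2
        + (r (m+2) * (r (m+2) - 1) * ffun a r (m+2) x *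
            (x * (∏ i ∈ Icc 1 m, gfun a r i x) * Gd a r (m+1) x
              + delta r (m+1) * ∏ i ∈ Icc 1 (m+1), ffun a r i x)) * E1
        + (r (m+2) * Gd2 a r (m+1) x * x ^ 2 *
            (∏ i ∈ Icc 1 m, gfun a r i x) ^ 2 * gfun a r (m+1) x) * A1
        + (r (m+2) * ffun a r (m+2) x * gfun a r (m+1) x) * E2
        - (delta r (m+1) * r (m+2) *
            ((∑ j ∈ Icc 1 (m+1), (delta r j - delta r (j-1)) *
                (∏ i ∈ Icc 1 (j-1), ffun a r i x) * (∏ i ∈ Icc j m, gfun a r i x))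
                * gfun a r (m+1) x
              + (delta r (m+1) * r (m+2) - delta r (m+1)) *
                ∏ i ∈ Icc 1 (m+1), ffun a r i x)) * E3

end Statement10Aux

/-- For `φ(x) = gₙ(x) − b·x` on `I(a,r)` one has
`x²·φ''(x) = (f₁⋯fₙ)/(g₁⋯g_{n−1})² · δₙ · ∑_{j=1}^n (δⱼ−δ_{j−1}) (∏_{i=1}^{j−1} fᵢ)(∏_{i=j}^{n−1} gᵢ)`
where `δ₀ = 1`, `δⱼ = r₁⋯rⱼ`. -/
theorem statement10 (n : ℕ) (hn : 1 ≤ n) (b : ℝ) (hb : 0 < b) (a r : ℕ → ℝ) :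
    ∀ x ∈ Panazzolo.Iset n a r,
      x ^ 2 * deriv (deriv (fun y => Panazzolo.gfun a r n y - b * y)) x
        = ((∏ i ∈ Finset.Icc 1 n, Panazzolo.ffun a r i x) /
            (∏ i ∈ Finset.Icc 1 (n - 1), Panazzolo.gfun a r i x) ^ 2) *
          (Panazzolo.delta r n *
            ∑ j ∈ Finset.Icc 1 n,
              (Panazzolo.delta r j - Panazzolo.delta r (j - 1)) *
                (∏ i ∈ Finset.Icc 1 (j - 1), Panazzolo.ffun a r i x) *
                (∏ i ∈ Finset.Icc j (n - 1), Panazzolo.gfun a r i x)) := by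
  intro x hx
  obtain ⟨m, rfl⟩ : ∃ m, n = m + 1 := ⟨n - 1, by omega⟩
  have hev : deriv (fun y => Panazzolo.gfun a r (m+1) y - b * y)
      =ᶠ[nhds x] fun y => Statement10Aux.Gd a r (m+1) y - b := by
    filter_upwards [Statement10Aux.eventually_Iset hx] with y hy
    have hb' : HasDerivAt (fun y : ℝ => b * y) b y := by
      simpa using (hasDerivAt_id y).const_mul b
    exact ((Statement10Aux.hasDerivAt_gfun hy (m+1) le_rfl).sub hb').deriv
  have h2 : deriv (deriv (fun y => Panazzolo.gfun a r (m+1) y - b * y)) x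
      = Statement10Aux.Gd2 a r (m+1) x := by
    rw [hev.deriv_eq]
    exact ((Statement10Aux.hasDerivAt_Gd hx (m+1) le_rfl).sub_const b).deriv
  rw [h2]
  simpa only [Nat.add_sub_cancel] using Statement10Aux.key hx m le_rfl
end
end

section
/- For all parameters b > 0 and (a_1,a_2,r_1,r_2) ∈ ℝ^4, the equation a_2 + (a_1 + x^{r_1})^{r_2} = b·x has at most three isolated solutions x in the interval I(a,r); equivalently, if the solution set is not all of I(a,r), it consists of at most 3 points counted with multiplicity as zeros of φ(x) = a_2 + (a_1 + x^{r_1})^{r_2} − b·x. -/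
open scoped BigOperators

noncomputable section

open Set Filter

section RolleMult

private lemma rolle_mult_aux (f : ℝ → ℝ) (s : Set ℝ) (hs : s.OrdConnected)
    (hf : ∀ x ∈ s, ContinuousAt f x) :
    ∀ (n : ℕ) (Z : Finset ℝ) (μ : ℝ → ℕ), Z.card = n →
    (∀ x ∈ Z, x ∈ s) → (∀ x ∈ Z, 1 ≤ μ x) →
    (∀ x ∈ Z, ∀ k < μ x, iteratedDeriv k f x = 0) →
    ∃ (Z' : Finset ℝ) (μ' : ℝ → ℕ), (∀ x ∈ Z', x ∈ s) ∧
      (∀ x ∈ Z', ∃ y ∈ Z, x ≤ y) ∧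
      (∀ x ∈ Z', ∀ k < μ' x, iteratedDeriv k (deriv f) x = 0) ∧
      ∑ x ∈ Z, μ x ≤ (∑ x ∈ Z', μ' x) + 1 := by
  intro n
  induction n with
  | zero =>
    intro Z μ hcard _ _ _
    refine ⟨∅, fun _ => 0, by simp, by simp, by simp, ?_⟩
    rw [Finset.card_eq_zero.mp hcard]; simp
  | succ n ih =>
    intro Z μ hcard hZs hZ1 hZ0
    have hZne : Z.Nonempty := Finset.card_pos.mp (by omega)
    set M := Z.max' hZne with hM
    have hMZ : M ∈ Z := Z.max'_mem hZne
    set Z₁ := Z.erase M with hZ₁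
    have hcard₁ : Z₁.card = n := by rw [hZ₁, Finset.card_erase_of_mem hMZ, hcard]; omega
    obtain ⟨Z', μ', hZ's, hZ'le, hZ'0, hsum⟩ :=
      ih Z₁ μ hcard₁ (fun x hx => hZs x (Finset.mem_of_mem_erase hx))
        (fun x hx => hZ1 x (Finset.mem_of_mem_erase hx))
        (fun x hx => hZ0 x (Finset.mem_of_mem_erase hx))
    -- condition at M for deriv f
    have hMcond : ∀ k < μ M - 1, iteratedDeriv k (deriv f) M = 0 := by
      intro k hk
      have := hZ0 M hMZ (k + 1) (by omega)
      rwa [iteratedDeriv_succ'] at this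
    have hsumZ : ∑ x ∈ Z, μ x = (∑ x ∈ Z₁, μ x) + μ M := by
      rw [hZ₁, ← Finset.sum_erase_add Z μ hMZ]
    rcases Finset.eq_empty_or_nonempty Z₁ with h1 | h1
    · -- Z = {M}
      have hZsingle : ∑ x ∈ Z₁, μ x = 0 := by rw [h1]; simp
      refine ⟨{M}, fun _ => μ M - 1, ?_, ?_, ?_, ?_⟩
      · intro x hx; rw [Finset.mem_singleton.mp hx]; exact hZs M hMZ
      · intro x hx; exact ⟨M, hMZ, le_of_eq (Finset.mem_singleton.mp hx)⟩
      · intro x hx; rw [Finset.mem_singleton.mp hx]; exact hMcond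
      · rw [hsumZ, hZsingle, Finset.sum_singleton]
        have := hZ1 M hMZ; omega
    · -- Z₁ nonempty: Rolle point between m := Z₁.max' and M
      set m := Z₁.max' h1 with hm
      have hmZ₁ : m ∈ Z₁ := Z₁.max'_mem h1
      have hmZ : m ∈ Z := Finset.mem_of_mem_erase hmZ₁
      have hmM : m < M := by
        have hle : m ≤ M := Z.le_max' m hmZ
        have hne : m ≠ M := Finset.ne_of_mem_erase hmZ₁
        exact lt_of_le_of_ne hle hne
      have hIcc : Icc m M ⊆ s := hs.out (hZs m hmZ) (hZs M hMZ)
      have hfm : f m = 0 := by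
        have := hZ0 m hmZ 0 (hZ1 m hmZ); rwa [iteratedDeriv_zero] at this
      have hfM : f M = 0 := by
        have := hZ0 M hMZ 0 (hZ1 M hMZ); rwa [iteratedDeriv_zero] at this
      obtain ⟨c, hc, hc0⟩ := exists_deriv_eq_zero hmM
        (fun x hx => (hf x (hIcc hx)).continuousWithinAt) (hfm.trans hfM.symm)
      have hZ'lt : ∀ x ∈ Z', x ≤ m := by
        intro x hx
        obtain ⟨y, hy, hxy⟩ := hZ'le x hx
        exact hxy.trans (Z₁.le_max' y hy)
      have hcZ' : c ∉ Z' := fun h => absurd (hZ'lt c h) (not_le.mpr hc.1)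
      have hMZ' : M ∉ Z' := fun h => absurd (hZ'lt M h) (not_le.mpr hmM)
      have hcM : c ≠ M := ne_of_lt hc.2
      set μ'' := Function.update (Function.update μ' M (μ M - 1)) c 1 with hμ''
      have hupd : ∀ x ∈ Z', μ'' x = μ' x := by
        intro x hx
        rw [hμ'', Function.update_of_ne (by rintro rfl; exact hcZ' hx),
          Function.update_of_ne (by rintro rfl; exact hMZ' hx)]
      have hμ''c : μ'' c = 1 := by rw [hμ'']; simp
      have hμ''M : μ'' M = μ M - 1 := by
        rw [hμ'', Function.update_of_ne (Ne.symm hcM), Function.update_self]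
      refine ⟨insert c (insert M Z'), μ'', ?_, ?_, ?_, ?_⟩
      · intro x hx
        rcases Finset.mem_insert.mp hx with rfl | hx
        · exact hIcc ⟨hc.1.le, hc.2.le⟩
        rcases Finset.mem_insert.mp hx with rfl | hx
        · exact hZs M hMZ
        · exact hZ's x hx
      · intro x hx
        rcases Finset.mem_insert.mp hx with rfl | hx
        · exact ⟨M, hMZ, hc.2.le⟩
        rcases Finset.mem_insert.mp hx with rfl | hx
        · exact ⟨M, hMZ, le_refl _⟩
        · obtain ⟨y, hy, hxy⟩ := hZ'le x hx
          exact ⟨y, Finset.mem_of_mem_erase hy, hxy⟩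
      · intro x hx k hk
        rcases Finset.mem_insert.mp hx with rfl | hx
        · rw [hμ''c] at hk
          interval_cases k
          rwa [iteratedDeriv_zero]
        rcases Finset.mem_insert.mp hx with rfl | hx
        · exact hMcond k (by rw [hμ''M] at hk; omega)
        · exact hZ'0 x hx k (by rw [hupd x hx] at hk; omega)
      · have hcongr : ∑ x ∈ Z', μ'' x = ∑ x ∈ Z', μ' x := Finset.sum_congr rfl hupd
        rw [Finset.sum_insert (by simp [Finset.mem_insert, hcM, hcZ']),
          Finset.sum_insert hMZ', hcongr, hμ''c, hμ''M, hsumZ]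
        have := hZ1 M hMZ
        omega

lemma rolle_mult (f : ℝ → ℝ) (s : Set ℝ) (hs : s.OrdConnected)
    (hf : ∀ x ∈ s, ContinuousAt f x)
    (Z : Finset ℝ) (μ : ℝ → ℕ)
    (hZs : ∀ x ∈ Z, x ∈ s)
    (hZ0 : ∀ x ∈ Z, ∀ k < μ x, iteratedDeriv k f x = 0) :
    ∃ (Z' : Finset ℝ) (μ' : ℝ → ℕ), (∀ x ∈ Z', x ∈ s) ∧
      (∀ x ∈ Z', ∀ k < μ' x, iteratedDeriv k (deriv f) x = 0) ∧
      ∑ x ∈ Z, μ x ≤ (∑ x ∈ Z', μ' x) + 1 := by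
  set Z₀ := Z.filter (fun x => μ x ≠ 0) with hZ₀
  obtain ⟨Z', μ', h1, _, h3, h4⟩ := rolle_mult_aux f s hs hf Z₀.card Z₀ μ rfl
    (fun x hx => hZs x (Finset.mem_of_mem_filter x hx))
    (fun x hx => Nat.one_le_iff_ne_zero.mpr (Finset.mem_filter.mp hx).2)
    (fun x hx => hZ0 x (Finset.mem_of_mem_filter x hx))
  refine ⟨Z', μ', h1, h3, ?_⟩
  rwa [← Finset.sum_filter_ne_zero Z]
end RolleMult

section Aux13

private def S13 (a₁ a₂ r₁ r₂ : ℝ) : Set ℝ :=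
  {x : ℝ | 0 < x ∧ 0 < a₁ + x ^ r₁ ∧ 0 < a₂ + (a₁ + x ^ r₁) ^ r₂}

private noncomputable def phi13 (b a₁ a₂ r₁ r₂ : ℝ) : ℝ → ℝ := fun y => a₂ + (a₁ + y ^ r₁) ^ r₂ - b * y

private noncomputable def phi13' (b a₁ a₂ r₁ r₂ : ℝ) : ℝ → ℝ :=
  fun y => r₁ * r₂ * (y ^ (r₁ - 1) * (a₁ + y ^ r₁) ^ (r₂ - 1)) - b

private noncomputable def phi13'' (b a₁ a₂ r₁ r₂ : ℝ) : ℝ → ℝ :=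
  fun y => r₁ * r₂ * (y ^ (r₁ - 2) * (a₁ + y ^ r₁) ^ (r₂ - 2)) *
    ((r₁ - 1) * a₁ + (r₁ * r₂ - 1) * y ^ r₁)

variable {b a₁ a₂ r₁ r₂ : ℝ}

private lemma S13_mem_nhds {x : ℝ} (hx : x ∈ S13 a₁ a₂ r₁ r₂) :
    S13 a₁ a₂ r₁ r₂ ∈ nhds x := by
  obtain ⟨hx1, hx2, hx3⟩ := hx
  have hc1 : ContinuousAt (fun y : ℝ => a₁ + y ^ r₁) x :=
    continuousAt_const.add (Real.continuousAt_rpow_const x r₁ (Or.inl hx1.ne'))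
  have hc2 : ContinuousAt (fun y : ℝ => a₂ + (a₁ + y ^ r₁) ^ r₂) x := by
    apply continuousAt_const.add
    exact hc1.rpow_const (Or.inl hx2.ne')
  have h1 : {y : ℝ | 0 < y} ∈ nhds x := lt_mem_nhds hx1
  have h2 : {y : ℝ | 0 < a₁ + y ^ r₁} ∈ nhds x := hc1 (lt_mem_nhds hx2)
  have h3 : {y : ℝ | 0 < a₂ + (a₁ + y ^ r₁) ^ r₂} ∈ nhds x := hc2 (lt_mem_nhds hx3)
  exact Filter.mem_of_superset (Filter.inter_mem (Filter.inter_mem h1 h2) h3)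
    (fun y hy => ⟨hy.1.1, hy.1.2, hy.2⟩)

private lemma rpow_min_le {u v w : ℝ} (hu : 0 < u) (huv : u ≤ v) (hvw : v ≤ w) (p : ℝ) :
    min (u ^ p) (w ^ p) ≤ v ^ p := by
  rcases le_or_gt 0 p with hp | hp
  · exact (min_le_left _ _).trans (Real.rpow_le_rpow hu.le huv hp)
  · exact (min_le_right _ _).trans
      (Real.rpow_le_rpow_of_nonpos (hu.trans_le huv) hvw hp.le)

private lemma S13_ordConnected : (S13 a₁ a₂ r₁ r₂).OrdConnected := by
  constructor
  rintro x ⟨hx1, hx2, hx3⟩ y ⟨hy1, hy2, hy3⟩ z ⟨hxz, hzy⟩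
  have hz1 : 0 < z := hx1.trans_le hxz
  have hzr : min (x ^ r₁) (y ^ r₁) ≤ z ^ r₁ := rpow_min_le hx1 hxz hzy r₁
  have hg2 : 0 < a₁ + z ^ r₁ := by
    rcases min_cases (x ^ r₁) (y ^ r₁) with ⟨h, _⟩ | ⟨h, _⟩ <;> rw [h] at hzr <;> linarith
  refine ⟨hz1, hg2, ?_⟩
  -- g1 z lies between min and max of g1 x, g1 y
  set gx := a₁ + x ^ r₁
  set gy := a₁ + y ^ r₁
  set gz := a₁ + z ^ r₁
  have hminle : min gx gy ≤ gz := by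
    have := hzr
    rcases min_cases (x ^ r₁) (y ^ r₁) with ⟨h, _⟩ | ⟨h, _⟩ <;>
      simp only [gx, gy, gz] <;>
      [exact (min_le_left _ _).trans (by rw [h] at this; linarith);
       exact (min_le_right _ _).trans (by rw [h] at this; linarith)]
  have hzmax : gz ≤ max gx gy := by
    have hzr' : z ^ r₁ ≤ max (x ^ r₁) (y ^ r₁) := by
      rcases le_or_gt 0 r₁ with hp | hp
      · exact le_max_of_le_right (Real.rpow_le_rpow hz1.le hzy hp)
      · exact le_max_of_le_left (Real.rpow_le_rpow_of_nonpos hx1 hxz hp.le)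
    rcases max_cases (x ^ r₁) (y ^ r₁) with ⟨h, _⟩ | ⟨h, _⟩ <;>
      [exact le_max_of_le_left (by rw [h] at hzr'; simp only [gx, gz]; linarith);
       exact le_max_of_le_right (by rw [h] at hzr'; simp only [gy, gz]; linarith)]
  have hminpos : 0 < min gx gy := lt_min hx2 hy2
  have hkey : min (gx ^ r₂) (gy ^ r₂) ≤ gz ^ r₂ := by
    have h1 : min ((min gx gy) ^ r₂) ((max gx gy) ^ r₂) ≤ gz ^ r₂ :=
      rpow_min_le hminpos hminle hzmax r₂
    rcases le_total gx gy with h | h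
    · rwa [min_eq_left h, max_eq_right h] at h1
    · rwa [min_eq_right h, max_eq_left h, min_comm] at h1
  rcases min_cases (gx ^ r₂) (gy ^ r₂) with ⟨h, _⟩ | ⟨h, _⟩ <;> rw [h] at hkey <;> linarith

private lemma hasDerivAt_phi13 {x : ℝ} (hx : x ∈ S13 a₁ a₂ r₁ r₂) :
    HasDerivAt (phi13 b a₁ a₂ r₁ r₂) (phi13' b a₁ a₂ r₁ r₂ x) x := by
  obtain ⟨hx1, hx2, _⟩ := hx
  have h0 : HasDerivAt (fun y : ℝ => y ^ r₁) (r₁ * x ^ (r₁ - 1)) x :=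
    Real.hasDerivAt_rpow_const (Or.inl hx1.ne')
  have hg2 := (h0.const_add a₁).rpow_const (p := r₂) (Or.inl hx2.ne')
  have h := (hg2.const_add a₂).sub ((hasDerivAt_id x).const_mul b)
  have hval : r₁ * x ^ (r₁ - 1) * r₂ * (a₁ + x ^ r₁) ^ (r₂ - 1) - b * 1
      = phi13' b a₁ a₂ r₁ r₂ x := by
    simp only [phi13']; ring
  rw [hval] at h
  exact h

private lemma hasDerivAt_phi13' {x : ℝ} (hx : x ∈ S13 a₁ a₂ r₁ r₂) :
    HasDerivAt (phi13' b a₁ a₂ r₁ r₂) (phi13'' b a₁ a₂ r₁ r₂ x) x := by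
  obtain ⟨hx1, hx2, _⟩ := hx
  have hA : HasDerivAt (fun y : ℝ => y ^ (r₁ - 1)) ((r₁ - 1) * x ^ (r₁ - 1 - 1)) x :=
    Real.hasDerivAt_rpow_const (Or.inl hx1.ne')
  have hB := ((Real.hasDerivAt_rpow_const (p := r₁) (Or.inl hx1.ne')).const_add
      a₁).rpow_const (p := r₂ - 1) (Or.inl hx2.ne')
  have h := ((hA.mul hB).const_mul (r₁ * r₂)).sub_const b
  have he1 : x ^ (r₁ - 1 - 1) = x ^ (r₁ - 2) := by rw [show r₁ - 1 - 1 = r₁ - 2 by ring]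
  have he2 : (a₁ + x ^ r₁) ^ (r₂ - 1 - 1) = (a₁ + x ^ r₁) ^ (r₂ - 2) := by
    rw [show r₂ - 1 - 1 = r₂ - 2 by ring]
  rw [he1, he2] at h
  have e1 : (a₁ + x ^ r₁) ^ (r₂ - 1) = (a₁ + x ^ r₁) ^ (r₂ - 2) * (a₁ + x ^ r₁) := by
    rw [show r₂ - 1 = r₂ - 2 + 1 by ring, Real.rpow_add_one hx2.ne']
  have e2 : x ^ (r₁ - 1) * x ^ (r₁ - 1) = x ^ (r₁ - 2) * x ^ r₁ := by
    rw [← Real.rpow_add hx1, ← Real.rpow_add hx1]; ring_nf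
  have hval : r₁ * r₂ * ((r₁ - 1) * x ^ (r₁ - 2) * (a₁ + x ^ r₁) ^ (r₂ - 1)
        + x ^ (r₁ - 1) * (r₁ * x ^ (r₁ - 1) * (r₂ - 1) * (a₁ + x ^ r₁) ^ (r₂ - 2)))
      = phi13'' b a₁ a₂ r₁ r₂ x := by
    simp only [phi13'']
    linear_combination (r₁ * r₂ * (r₁ - 1) * x ^ (r₁ - 2)) * e1 +
      (r₁ * r₂ * (r₂ - 1) * r₁ * (a₁ + x ^ r₁) ^ (r₂ - 2)) * e2
  rw [hval] at h
  exact h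

private lemma hasDerivAt_phi13'' {x : ℝ} (hx : x ∈ S13 a₁ a₂ r₁ r₂) :
    ∃ d : ℝ, HasDerivAt (phi13'' b a₁ a₂ r₁ r₂) d x ∧
      (((r₁ - 1) * a₁ + (r₁ * r₂ - 1) * x ^ r₁ = 0) →
        d = r₁ * r₂ * (x ^ (r₁ - 2) * (a₁ + x ^ r₁) ^ (r₂ - 2)) *
          ((r₁ * r₂ - 1) * (r₁ * x ^ (r₁ - 1)))) := by
  obtain ⟨hx1, hx2, _⟩ := hx
  have hA1 : HasDerivAt (fun y : ℝ => y ^ (r₁ - 2)) ((r₁ - 2) * x ^ (r₁ - 2 - 1)) x :=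
    Real.hasDerivAt_rpow_const (Or.inl hx1.ne')

  have hA2 := ((Real.hasDerivAt_rpow_const (p := r₁) (Or.inl hx1.ne')).const_add
      a₁).rpow_const (p := r₂ - 2) (Or.inl hx2.ne')
  have hA := (hA1.mul hA2).const_mul (r₁ * r₂)
  have hu : HasDerivAt (fun y : ℝ => (r₁ - 1) * a₁ + (r₁ * r₂ - 1) * y ^ r₁)
      ((r₁ * r₂ - 1) * (r₁ * x ^ (r₁ - 1))) x := by
    have := (Real.hasDerivAt_rpow_const (x := x) (p := r₁) (Or.inl hx1.ne')).const_mul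
      (r₁ * r₂ - 1)
    exact this.const_add ((r₁ - 1) * a₁)
  have h := hA.mul hu
  refine ⟨_, h, fun hu0 => ?_⟩
  beta_reduce
  simp only [Pi.mul_apply]
  linear_combination (r₁ * r₂ * ((r₁ - 2) * x ^ (r₁ - 2 - 1) * (a₁ + x ^ r₁) ^ (r₂ - 2)
    + x ^ (r₁ - 2) * (r₁ * x ^ (r₁ - 1) * (r₂ - 2) * (a₁ + x ^ r₁) ^ (r₂ - 2 - 1)))) * hu0

private lemma sum_le_one_of_unique {W : Finset ℝ} {ν : ℝ → ℕ}
    (huniq : ∀ x ∈ W, ∀ y ∈ W, ν x ≠ 0 → ν y ≠ 0 → x = y)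
    (hbd : ∀ x ∈ W, ν x ≤ 1) : ∑ x ∈ W, ν x ≤ 1 := by
  rw [← Finset.sum_filter_ne_zero W]
  set F := W.filter (fun x => ν x ≠ 0) with hF
  have hcard : F.card ≤ 1 := Finset.card_le_one.mpr (fun x hx y hy =>
    huniq x (Finset.mem_of_mem_filter x hx) y (Finset.mem_of_mem_filter y hy)
      (Finset.mem_filter.mp hx).2 (Finset.mem_filter.mp hy).2)
  have := Finset.sum_le_card_nsmul F ν 1 (fun x hx => hbd x (Finset.mem_of_mem_filter x hx))
  simpa using this.trans (by simpa using hcard)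


/-- For all `b > 0` and `(a₁,a₂,r₁,r₂) ∈ ℝ⁴`, if
`φ(x) = a₂ + (a₁ + x^{r₁})^{r₂} − b·x` is not identically zero on `I(a,r)`, then its zeros in
`I(a,r)`, counted with multiplicity, number at most `3`. -/
theorem statement13 (b a₁ a₂ r₁ r₂ : ℝ) (hb : 0 < b)
    (hnz : ¬ ∀ x : ℝ, (0 < x ∧ 0 < a₁ + x ^ r₁ ∧ 0 < a₂ + (a₁ + x ^ r₁) ^ r₂) →
        a₂ + (a₁ + x ^ r₁) ^ r₂ - b * x = 0) :
    ∀ (Z : Finset ℝ) (μ : ℝ → ℕ),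
      (∀ x ∈ Z, 0 < x ∧ 0 < a₁ + x ^ r₁ ∧ 0 < a₂ + (a₁ + x ^ r₁) ^ r₂) →
      (∀ x ∈ Z, ∀ k < μ x,
        iteratedDeriv k (fun y => a₂ + (a₁ + y ^ r₁) ^ r₂ - b * y) x = 0) →
      ∑ x ∈ Z, μ x ≤ 3 := by
  intro Z μ hZS hZ0
  set S : Set ℝ := S13 a₁ a₂ r₁ r₂ with hS
  set φ : ℝ → ℝ := phi13 b a₁ a₂ r₁ r₂ with hφdef
  have hmem : ∀ x ∈ Z, x ∈ S := hZS
  have hZ0' : ∀ x ∈ Z, ∀ k < μ x, iteratedDeriv k φ x = 0 := hZ0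
  have hcont0 : ∀ x ∈ S, ContinuousAt φ x := fun x hx => (hasDerivAt_phi13 hx).continuousAt
  have hder_eq : ∀ x ∈ S, deriv φ x = phi13' b a₁ a₂ r₁ r₂ x :=
    fun x hx => (hasDerivAt_phi13 hx).deriv
  have hev1 : ∀ x ∈ S, deriv φ =ᶠ[nhds x] phi13' b a₁ a₂ r₁ r₂ :=
    fun x hx => eventuallyEq_of_mem (S13_mem_nhds hx) (fun y hy => hder_eq y hy)
  have hcont1 : ∀ x ∈ S, ContinuousAt (deriv φ) x :=
    fun x hx => ((hasDerivAt_phi13' hx).continuousAt).congr_of_eventuallyEq (hev1 x hx)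
  have hd2eq : ∀ x ∈ S, deriv (deriv φ) x = phi13'' b a₁ a₂ r₁ r₂ x :=
    fun x hx => ((hev1 x hx).deriv_eq).trans (hasDerivAt_phi13' hx).deriv
  have hev2 : ∀ x ∈ S, deriv (deriv φ) =ᶠ[nhds x] phi13'' b a₁ a₂ r₁ r₂ :=
    fun x hx => eventuallyEq_of_mem (S13_mem_nhds hx) (fun y hy => hd2eq y hy)
  have hd3eq : ∀ x ∈ S, ((r₁ - 1) * a₁ + (r₁ * r₂ - 1) * x ^ r₁ = 0) →
      deriv (deriv (deriv φ)) x = r₁ * r₂ * (x ^ (r₁ - 2) * (a₁ + x ^ r₁) ^ (r₂ - 2)) *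
        ((r₁ * r₂ - 1) * (r₁ * x ^ (r₁ - 1))) := by
    intro x hx hu0
    obtain ⟨d, hd, he⟩ := hasDerivAt_phi13'' (b := b) hx
    rw [(hev2 x hx).deriv_eq, hd.deriv, he hu0]
  -- first application of Rolle
  obtain ⟨Z₁, μ₁, hZ₁S, hZ₁0, hs1⟩ :=
    rolle_mult φ S S13_ordConnected hcont0 Z μ hmem hZ0'
  rcases le_or_gt (r₁ * r₂) 0 with hr | hrpos
  · -- φ' < 0 on S
    have h10 : ∀ x ∈ Z₁, μ₁ x = 0 := by
      intro x hx
      by_contra h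
      have h1 := hZ₁0 x hx 0 (Nat.pos_of_ne_zero h)
      rw [iteratedDeriv_zero] at h1
      have h2 := (hder_eq x (hZ₁S x hx)).symm.trans h1
      obtain ⟨hx1, hx2, _⟩ := hZ₁S x hx
      have hp1 : 0 < x ^ (r₁ - 1) := Real.rpow_pos_of_pos hx1 _
      have hp2 : 0 < (a₁ + x ^ r₁) ^ (r₂ - 1) := Real.rpow_pos_of_pos hx2 _
      simp only [phi13'] at h2
      have hP := mul_pos hp1 hp2
      nlinarith [mul_nonneg (neg_nonneg.mpr hr) hP.le]
    rw [Finset.sum_eq_zero h10] at hs1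
    omega
  · have hr₁ : r₁ ≠ 0 := by rintro rfl; simp at hrpos
    by_cases hcase : r₁ * r₂ = 1 ∧ (r₁ - 1) * a₁ = 0
    · -- degenerate case: φ' is constant 1 - b on S
      obtain ⟨hone, hdeg⟩ := hcase
      have hkey : ∀ x ∈ S, x ^ (r₁ - 1) * (a₁ + x ^ r₁) ^ (r₂ - 1) = 1 := by
        intro x hx
        obtain ⟨hx1, hx2, _⟩ := hx
        rcases mul_eq_zero.mp hdeg with h1 | ha
        · have hr1 : r₁ = 1 := by linarith
          have hr2 : r₂ = 1 := by rw [hr1, one_mul] at hone; exact hone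
          rw [hr1, hr2]
          norm_num
        · rw [ha, zero_add, ← Real.rpow_mul hx1.le, ← Real.rpow_add hx1,
            show r₁ - 1 + r₁ * (r₂ - 1) = 0 by linear_combination hone, Real.rpow_zero]
      rcases eq_or_ne b 1 with hb1 | hb1
      · -- φ is constant on S
        have hφc : ∃ c : ℝ, ∀ x ∈ S, φ x = c := by
          rcases mul_eq_zero.mp hdeg with h1 | ha
          · have hr1 : r₁ = 1 := by linarith
            have hr2 : r₂ = 1 := by rw [hr1, one_mul] at hone; exact hone
            refine ⟨a₂ + a₁, fun x hx => ?_⟩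
            simp only [hφdef, phi13, hr1, hr2, Real.rpow_one, hb1]
            ring
          · refine ⟨a₂, fun x hx => ?_⟩
            obtain ⟨hx1, _, _⟩ := hx
            simp only [hφdef, phi13, ha, zero_add, ← Real.rpow_mul hx1.le, hone,
              Real.rpow_one, hb1]
            ring
        obtain ⟨c, hc⟩ := hφc
        rcases eq_or_ne c 0 with rfl | hcne
        · exact absurd (fun x hx => hc x hx) hnz
        · have : ∀ x ∈ Z, μ x = 0 := by
            intro x hx
            by_contra h
            have h1 := hZ0' x hx 0 (Nat.pos_of_ne_zero h)
            rw [iteratedDeriv_zero] at h1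
            exact hcne ((hc x (hmem x hx)).symm.trans h1)
          rw [Finset.sum_eq_zero this]
          omega
      · -- φ' = 1 - b ≠ 0 on S
        have h10 : ∀ x ∈ Z₁, μ₁ x = 0 := by
          intro x hx
          by_contra h
          have h1 := hZ₁0 x hx 0 (Nat.pos_of_ne_zero h)
          rw [iteratedDeriv_zero] at h1
          have h2 := (hder_eq x (hZ₁S x hx)).symm.trans h1
          simp only [phi13', hkey x (hZ₁S x hx), hone] at h2
          apply hb1
          linarith
        rw [Finset.sum_eq_zero h10] at hs1
        omega
    · -- main case: second application of Rolle, then φ'' has ≤ 1 zero w/ mult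
      obtain ⟨Z₂, μ₂, hZ₂S, hZ₂0, hs2⟩ :=
        rolle_mult (deriv φ) S S13_ordConnected hcont1 Z₁ μ₁ hZ₁S hZ₁0
      -- points with μ₂ ≠ 0 satisfy u x = 0
      have hu0 : ∀ x ∈ Z₂, μ₂ x ≠ 0 → (r₁ - 1) * a₁ + (r₁ * r₂ - 1) * x ^ r₁ = 0 := by
        intro x hx h
        have h1 := hZ₂0 x hx 0 (Nat.pos_of_ne_zero h)
        rw [iteratedDeriv_zero] at h1
        have h2 := (hd2eq x (hZ₂S x hx)).symm.trans h1
        obtain ⟨hx1, hx2, _⟩ := hZ₂S x hx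
        simp only [phi13''] at h2
        rcases mul_eq_zero.mp h2 with h3 | h3
        · exfalso
          have hp : 0 < r₁ * r₂ * (x ^ (r₁ - 2) * (a₁ + x ^ r₁) ^ (r₂ - 2)) :=
            mul_pos hrpos (mul_pos (Real.rpow_pos_of_pos hx1 _) (Real.rpow_pos_of_pos hx2 _))
          exact hp.ne' h3
        · exact h3
      rcases eq_or_ne (r₁ * r₂) 1 with honeq | hone'
      · -- r₁r₂ = 1, (r₁-1)a₁ ≠ 0 : u never vanishes, so μ₂ ≡ 0
        have hdeg : (r₁ - 1) * a₁ ≠ 0 := fun h => hcase ⟨honeq, h⟩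
        have h20 : ∀ x ∈ Z₂, μ₂ x = 0 := by
          intro x hx
          by_contra h
          have := hu0 x hx h
          rw [show r₁ * r₂ - 1 = 0 by rw [honeq]; ring] at this
          simp only [zero_mul, add_zero] at this
          exact hdeg this
        rw [Finset.sum_eq_zero h20] at hs2
        omega
      · -- r₁r₂ ≠ 1 : at most one zero of u, each of multiplicity one
        have hone'' : r₁ * r₂ - 1 ≠ 0 := sub_ne_zero.mpr hone'
        have huniq : ∀ x ∈ Z₂, ∀ y ∈ Z₂, μ₂ x ≠ 0 → μ₂ y ≠ 0 → x = y := by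
          intro x hx y hy hmx hmy
          have h1 := hu0 x hx hmx
          have h2 := hu0 y hy hmy
          obtain ⟨hx1, _, _⟩ := hZ₂S x hx
          obtain ⟨hy1, _, _⟩ := hZ₂S y hy
          have h3 : (r₁ * r₂ - 1) * x ^ r₁ = (r₁ * r₂ - 1) * y ^ r₁ := by linarith
          have h4 : x ^ r₁ = y ^ r₁ := mul_left_cancel₀ hone'' h3
          have h5 : (x ^ r₁) ^ r₁⁻¹ = (y ^ r₁) ^ r₁⁻¹ := by rw [h4]
          rwa [← Real.rpow_mul hx1.le, ← Real.rpow_mul hy1.le, mul_inv_cancel₀ hr₁,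
            Real.rpow_one, Real.rpow_one] at h5
        have hbd : ∀ x ∈ Z₂, μ₂ x ≤ 1 := by
          intro x hx
          by_contra h
          push_neg at h
          have hmx : μ₂ x ≠ 0 := by omega
          have h1 := hZ₂0 x hx 1 (by omega)
          rw [iteratedDeriv_one] at h1
          have h2 := (hd3eq x (hZ₂S x hx) (hu0 x hx hmx)).symm.trans h1
          obtain ⟨hx1, hx2, _⟩ := hZ₂S x hx
          have hne : r₁ * r₂ * (x ^ (r₁ - 2) * (a₁ + x ^ r₁) ^ (r₂ - 2)) *
              ((r₁ * r₂ - 1) * (r₁ * x ^ (r₁ - 1))) ≠ 0 := by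
            apply mul_ne_zero
            · exact (mul_pos hrpos (mul_pos (Real.rpow_pos_of_pos hx1 _)
                (Real.rpow_pos_of_pos hx2 _))).ne'
            · exact mul_ne_zero hone''
                (mul_ne_zero hr₁ (Real.rpow_pos_of_pos hx1 _).ne')
          exact hne h2
        have := sum_le_one_of_unique huniq hbd
        omega
end Aux13
end
end

section
/- There exist parameters b > 0 and (a_1,a_2,a_3,r_1,r_2,r_3) ∈ ℝ^6 such that the equation a_3 + (a_2 + (a_1 + x^{r_1})^{r_2})^{r_3} = b·x has at least five distinct solutions x in I(a,r); in particular this holds for b = 1, a_3 = −8.39×10^{−6}, a_2 = 0.0035836, a_1 = −0.012, r_1 = 53/150, r_2 = 11/8, r_3 = 2. Consequently fp(3) = 5. -/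
open scoped BigOperators

noncomputable section

/-- The solution set `S₃(b,a,r) = {x ∈ I(a,r) : a₃ + (a₂ + (a₁ + x^{r₁})^{r₂})^{r₃} = b·x}`. -/
def S3 (b a₁ a₂ a₃ r₁ r₂ r₃ : ℝ) : Set ℝ :=
  {x : ℝ | (0 < x ∧ 0 < a₁ + x ^ r₁ ∧ 0 < a₂ + (a₁ + x ^ r₁) ^ r₂ ∧
      0 < a₃ + (a₂ + (a₁ + x ^ r₁) ^ r₂) ^ r₃) ∧
    a₃ + (a₂ + (a₁ + x ^ r₁) ^ r₂) ^ r₃ = b * x}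

section StatementSixteenHelpers
open Real Set

/-- Rolle chain helper -/
lemma rolle_tuple {k : ℕ} (F F' : ℝ → ℝ) (z : Fin (k + 1) → ℝ) (hz : StrictMono z)
    (hd : ∀ t, z 0 ≤ t → t ≤ z (Fin.last k) → HasDerivAt F (F' t) t)
    (h0 : ∀ i, F (z i) = 0) :
    ∃ y : Fin k → ℝ, StrictMono y ∧
      (∀ i, z i.castSucc < y i ∧ y i < z i.succ) ∧ ∀ i, F' (y i) = 0 := by
  have sub : ∀ i : Fin k, ∀ t, z i.castSucc ≤ t → t ≤ z i.succ →
      z 0 ≤ t ∧ t ≤ z (Fin.last k) := by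
    intro i t h1 h2
    exact ⟨le_trans (hz.monotone (Fin.zero_le _)) h1,
      le_trans h2 (hz.monotone (Fin.le_last _))⟩
  have key : ∀ i : Fin k, ∃ y, z i.castSucc < y ∧ y < z i.succ ∧ F' y = 0 := by
    intro i
    have hab : z i.castSucc < z i.succ := hz Fin.castSucc_lt_succ
    have hcont : ContinuousOn F (Icc (z i.castSucc) (z i.succ)) := by
      intro t ht
      obtain ⟨u1, u2⟩ := sub i t ht.1 ht.2
      exact (hd t u1 u2).continuousAt.continuousWithinAt
    obtain ⟨c, hc, hc0⟩ := exists_deriv_eq_zero hab hcont ((h0 _).trans (h0 _).symm)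
    obtain ⟨u1, u2⟩ := sub i c hc.1.le hc.2.le
    exact ⟨c, hc.1, hc.2, by rw [← (hd c u1 u2).deriv]; exact hc0⟩
  choose y hy1 hy2 hy3 using key
  refine ⟨y, ?_, fun i => ⟨hy1 i, hy2 i⟩, hy3⟩
  intro i j hij
  calc y i < z i.succ := hy2 i
    _ ≤ z j.castSucc := hz.monotone (Fin.succ_le_castSucc_iff.mpr hij)
    _ < y j := hy1 j

/-- Generalized Descartes: a sum of `k` real-power monomials with distinct exponents
having `k` distinct positive roots has all coefficients zero. -/
lemma powsum_zero : ∀ (k : ℕ) (e c : Fin k → ℝ), Function.Injective e →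
    ∀ z : Fin k → ℝ, StrictMono z → (∀ i, 0 < z i) →
    (∀ i, ∑ j, c j * z i ^ e j = 0) → ∀ j, c j = 0 := by
  intro k
  induction k with
  | zero => intro e c _ z _ _ _ j; exact absurd j.2 (by omega)
  | succ k ih =>
    intro e c he z hz hzpos hzero
    -- divide by z ^ (e 0)
    set f : ℝ → ℝ := fun w => ∑ j, c j * w ^ (e j - e 0) with hf
    have hfz : ∀ i, f (z i) = 0 := by
      intro i
      have : f (z i) = (∑ j, c j * z i ^ e j) / z i ^ (e 0) := by
        rw [Finset.sum_div]
        refine Finset.sum_congr rfl fun j _ => ?_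
        rw [Real.rpow_sub (hzpos i)]; ring
      rw [this, hzero i, zero_div]
    set D : ℝ → ℝ := fun w => ∑ j, c j * ((e j - e 0) * w ^ (e j - e 0 - 1)) with hD
    have hder : ∀ t, 0 < t → HasDerivAt f (D t) t := by
      intro t ht
      exact HasDerivAt.fun_sum fun j _ =>
        ((Real.hasDerivAt_rpow_const (p := e j - e 0) (Or.inl ht.ne')).const_mul (c j))
    obtain ⟨y, hy, hyb, hy0⟩ := rolle_tuple f D z hz
      (fun t h1 h2 => hder t (lt_of_lt_of_le (hzpos 0) h1)) hfz
    have hypos : ∀ i, 0 < y i := fun i =>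
      lt_trans (lt_of_lt_of_le (hzpos 0) (hz.monotone (Fin.zero_le _))) (hyb i).1
    have hsucc : ∀ j : Fin k, c j.succ * (e j.succ - e 0) = 0 := by
      have := ih (fun j : Fin k => e j.succ - e 0 - 1)
        (fun j : Fin k => c j.succ * (e j.succ - e 0))
        (fun j₁ j₂ h => by
          have h' : e j₁.succ - e 0 - 1 = e j₂.succ - e 0 - 1 := h
          exact Fin.succ_injective _ (he (by linarith)))
        y hy hypos ?_
      · exact this
      · intro i
        have h0 : ∑ j : Fin (k+1), c j * ((e j - e 0) * y i ^ (e j - e 0 - 1)) = 0 := hy0 i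
        rw [Fin.sum_univ_succ, sub_self, zero_mul, mul_zero, zero_add] at h0
        rw [← h0]
        exact Finset.sum_congr rfl fun j _ => by ring
    have hc0 : c 0 = 0 := by
      have h00 := hzero 0
      rw [Fin.sum_univ_succ] at h00
      have : ∀ j : Fin k, c j.succ = 0 := by
        intro j
        have hne : e j.succ - e 0 ≠ 0 := by
          intro hh
          exact (Fin.succ_ne_zero j) (he (by linarith))
        have := hsucc j
        rcases mul_eq_zero.mp this with h | h
        · exact h
        · exact absurd h hne
      simp only [this, zero_mul, Finset.sum_const_zero, add_zero] at h00
      have := Real.rpow_pos_of_pos (hzpos 0) (e 0)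
      rcases mul_eq_zero.mp h00 with h | h
      · exact h
      · exact absurd h this.ne'
    intro j
    rcases Fin.eq_zero_or_eq_succ j with rfl | ⟨j', rfl⟩
    · exact hc0
    · rcases mul_eq_zero.mp (hsucc j') with h | h
      · exact h
      · exact absurd (he (by linarith : e j'.succ = e 0)) (Fin.succ_ne_zero j')

lemma four_term_zero {s A B C D : ℝ} (hs : s ≠ 0) (z : Fin 4 → ℝ) (hz : StrictMono z)
    (hpos : ∀ i, 0 < z i)
    (h0 : ∀ i, A * z i ^ (s + 1) + B * z i ^ s + C * z i + D = 0) :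
    ∀ w : ℝ, 0 < w → A * w ^ (s + 1) + B * w ^ s + C * w + D = 0 := by
  intro w hw
  rcases eq_or_ne s 1 with rfl | hs1
  · have key := powsum_zero 3 ![(2:ℝ), 1, 0] ![A, B + C, D]
      (by
        intro a b
        fin_cases a <;> fin_cases b <;> intro hab <;>
          simp only [Matrix.cons_val_zero, Matrix.cons_val_one, Matrix.head_cons,
            Matrix.cons_val_two, Matrix.tail_cons, Matrix.cons_val_fin_one] at hab <;>
          first | rfl | (exfalso; norm_num at hab))
      (fun i => z i.castSucc) (hz.comp Fin.strictMono_castSucc) (fun i => hpos _)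
      (by
        intro i
        have h := h0 i.castSucc
        rw [Fin.sum_univ_three]
        simp only [Matrix.cons_val_zero, Matrix.cons_val_one, Matrix.head_cons,
          Real.rpow_zero, Real.rpow_one, Matrix.cons_val_two, Matrix.tail_cons]
        rw [Real.rpow_one] at h
        norm_num at h ⊢
        linarith)
    have hA : A = 0 := by simpa using key 0
    have hBC : B + C = 0 := by simpa using key 1
    have hD : D = 0 := by simpa using key 2
    have hB : B = -C := by linarith
    rw [Real.rpow_one, hA, hD, hB]
    ring
  rcases eq_or_ne s (-1) with rfl | hsm1
  · have key := powsum_zero 3 ![(1:ℝ), 0, -1] ![C, A + D, B]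
      (by
        intro a b
        fin_cases a <;> fin_cases b <;> intro hab <;>
          simp only [Matrix.cons_val_zero, Matrix.cons_val_one, Matrix.head_cons,
            Matrix.cons_val_two, Matrix.tail_cons, Matrix.cons_val_fin_one] at hab <;>
          first | rfl | (exfalso; norm_num at hab))
      (fun i => z i.castSucc) (hz.comp Fin.strictMono_castSucc) (fun i => hpos _)
      (by
        intro i
        have h := h0 i.castSucc
        rw [Fin.sum_univ_three]
        simp only [Matrix.cons_val_zero, Matrix.cons_val_one, Matrix.head_cons,
          Real.rpow_zero, Real.rpow_one, Matrix.cons_val_two, Matrix.tail_cons]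
        norm_num at h ⊢
        linarith)
    have hC : C = 0 := by simpa using key 0
    have hAD : A + D = 0 := by simpa using key 1
    have hB : B = 0 := by simpa using key 2
    have hA : A = -D := by linarith
    norm_num [hB, hC, hA]
  · have key := powsum_zero 4 ![s + 1, s, 1, 0] ![A, B, C, D]
      (by
        intro a b
        fin_cases a <;> fin_cases b <;> intro hab <;>
          first
          | rfl
          | (exfalso; norm_num at hab <;>
             first
             | exact hs hab | exact hs1 hab | exact hsm1 hab
             | exact hs hab.symm | exact hs1 hab.symm | exact hsm1 hab.symm
             | (apply hs; linarith) | (apply hs1; linarith) | (apply hsm1; linarith)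
             | linarith))
      z hz hpos
      (by
        intro i
        have h := h0 i
        rw [Fin.sum_univ_four]
        simp only [Matrix.cons_val_zero, Matrix.cons_val_one, Matrix.head_cons,
          Real.rpow_zero, Real.rpow_one, Matrix.cons_val_two, Matrix.tail_cons,
          Matrix.cons_val_three]
        linarith)
    have hA : A = 0 := by simpa using key 0
    have hB : B = 0 := by simpa using key 1
    have hC : C = 0 := by simpa using key 2
    have hD : D = 0 := by simpa using key 3
    simp [hA, hB, hC, hD]

-- derivative of h
lemma hasDerivAt_h (b a₁ a₂ a₃ r₁ r₂ r₃ t : ℝ) (ht : 0 < t) (hw : 0 < a₁ + t ^ r₁)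
    (hs : 0 < a₂ + (a₁ + t ^ r₁) ^ r₂) :
    HasDerivAt (fun t => a₃ + (a₂ + (a₁ + t ^ r₁) ^ r₂) ^ r₃ - b * t)
      (r₁ * r₂ * r₃ * ((a₂ + (a₁ + t ^ r₁) ^ r₂) ^ (r₃ - 1) * (a₁ + t ^ r₁) ^ (r₂ - 1) *
        t ^ (r₁ - 1)) - b) t := by
  have dw : HasDerivAt (fun t : ℝ => a₁ + t ^ r₁) (r₁ * t ^ (r₁ - 1)) t :=
    (Real.hasDerivAt_rpow_const (Or.inl ht.ne')).const_add a₁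
  have ds : HasDerivAt (fun t : ℝ => a₂ + (a₁ + t ^ r₁) ^ r₂)
      (r₁ * t ^ (r₁ - 1) * r₂ * (a₁ + t ^ r₁) ^ (r₂ - 1)) t :=
    (dw.rpow_const (Or.inl hw.ne')).const_add a₂
  have dg : HasDerivAt (fun t : ℝ => a₃ + (a₂ + (a₁ + t ^ r₁) ^ r₂) ^ r₃)
      (r₁ * t ^ (r₁ - 1) * r₂ * (a₁ + t ^ r₁) ^ (r₂ - 1) * r₃ *
        (a₂ + (a₁ + t ^ r₁) ^ r₂) ^ (r₃ - 1)) t :=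
    (ds.rpow_const (Or.inl hs.ne')).const_add a₃
  have := dg.sub ((hasDerivAt_id t).const_mul b)
  refine this.congr_deriv ?_
  ring

-- derivative of h1
lemma hasDerivAt_h1 (b a₁ a₂ a₃ r₁ r₂ r₃ t : ℝ) (ht : 0 < t) (hw : 0 < a₁ + t ^ r₁)
    (hs : 0 < a₂ + (a₁ + t ^ r₁) ^ r₂) :
    HasDerivAt (fun t => r₁ * r₂ * r₃ * ((a₂ + (a₁ + t ^ r₁) ^ r₂) ^ (r₃ - 1) *
        (a₁ + t ^ r₁) ^ (r₂ - 1) * t ^ (r₁ - 1)) - b)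
      (r₁ * r₂ * r₃ * ((a₂ + (a₁ + t ^ r₁) ^ r₂) ^ (r₃ - 2) * (a₁ + t ^ r₁) ^ (r₂ - 2) *
          t ^ (r₁ - 2)) *
        ((r₁ * r₂ * r₃ - 1) * (a₁ + t ^ r₁) ^ (r₂ + 1) -
          a₁ * (r₁ * r₂ * r₃ - r₁) * (a₁ + t ^ r₁) ^ r₂ +
          a₂ * (r₁ * r₂ - 1) * (a₁ + t ^ r₁) - a₁ * a₂ * (r₁ * r₂ - r₁))) t := by
  have dw : HasDerivAt (fun t : ℝ => a₁ + t ^ r₁) (r₁ * t ^ (r₁ - 1)) t :=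
    (Real.hasDerivAt_rpow_const (Or.inl ht.ne')).const_add a₁
  have ds : HasDerivAt (fun t : ℝ => a₂ + (a₁ + t ^ r₁) ^ r₂)
      (r₁ * t ^ (r₁ - 1) * r₂ * (a₁ + t ^ r₁) ^ (r₂ - 1)) t :=
    (dw.rpow_const (Or.inl hw.ne')).const_add a₂
  have dS : HasDerivAt (fun t : ℝ => (a₂ + (a₁ + t ^ r₁) ^ r₂) ^ (r₃ - 1))
      (r₁ * t ^ (r₁ - 1) * r₂ * (a₁ + t ^ r₁) ^ (r₂ - 1) * (r₃ - 1) *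
        (a₂ + (a₁ + t ^ r₁) ^ r₂) ^ (r₃ - 1 - 1)) t :=
    ds.rpow_const (Or.inl hs.ne')
  have dW : HasDerivAt (fun t : ℝ => (a₁ + t ^ r₁) ^ (r₂ - 1))
      (r₁ * t ^ (r₁ - 1) * (r₂ - 1) * (a₁ + t ^ r₁) ^ (r₂ - 1 - 1)) t :=
    dw.rpow_const (Or.inl hw.ne')
  have dX : HasDerivAt (fun t : ℝ => t ^ (r₁ - 1)) ((r₁ - 1) * t ^ (r₁ - 1 - 1)) t :=
    Real.hasDerivAt_rpow_const (Or.inl ht.ne')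
  have big := (((dS.mul dW).mul dX).const_mul (r₁ * r₂ * r₃)).sub_const b
  simp only [Pi.mul_apply] at big
  refine big.congr_deriv ?_
  -- now an algebraic identity
  have ht' := ht.ne'
  have hw' := hw.ne'
  have hs' := hs.ne'
  have ar1 : ∀ p : ℝ, t ^ (p + 1) = t ^ p * t := fun p => by
    rw [Real.rpow_add ht, Real.rpow_one]
  have ar2 : ∀ p : ℝ, (a₁ + t ^ r₁) ^ (p + 1) = (a₁ + t ^ r₁) ^ p * (a₁ + t ^ r₁) := fun p => by
    rw [Real.rpow_add hw, Real.rpow_one]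
  have ar3 : ∀ p : ℝ, (a₂ + (a₁ + t ^ r₁) ^ r₂) ^ (p + 1) =
      (a₂ + (a₁ + t ^ r₁) ^ r₂) ^ p * (a₂ + (a₁ + t ^ r₁) ^ r₂) := fun p => by
    rw [Real.rpow_add hs, Real.rpow_one]
  have e6 : t ^ r₁ = t ^ (r₁ - 2) * t * t := by
    rw [← ar1, ← ar1]; congr 1; ring
  have e3 : t ^ (r₁ - 1) = t ^ (r₁ - 2) * t := by
    rw [← ar1]; congr 1; ring
  have e3' : t ^ (r₁ - 1 - 1) = t ^ (r₁ - 2) := by congr 1; ring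
  have e5 : (a₁ + t ^ r₁) ^ r₂ = (a₁ + t ^ r₁) ^ (r₂ - 2) * (a₁ + t ^ r₁) * (a₁ + t ^ r₁) := by
    rw [← ar2, ← ar2]; congr 1; ring
  have e4 : (a₁ + t ^ r₁) ^ (r₂ + 1) =
      (a₁ + t ^ r₁) ^ (r₂ - 2) * (a₁ + t ^ r₁) * (a₁ + t ^ r₁) * (a₁ + t ^ r₁) := by
    rw [← ar2, ← ar2, ← ar2]; congr 1; ring
  have e2 : (a₁ + t ^ r₁) ^ (r₂ - 1) = (a₁ + t ^ r₁) ^ (r₂ - 2) * (a₁ + t ^ r₁) := by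
    rw [← ar2]; congr 1; ring
  have e2' : (a₁ + t ^ r₁) ^ (r₂ - 1 - 1) = (a₁ + t ^ r₁) ^ (r₂ - 2) := by congr 1; ring
  have e1 : (a₂ + (a₁ + t ^ r₁) ^ r₂) ^ (r₃ - 1) =
      (a₂ + (a₁ + t ^ r₁) ^ r₂) ^ (r₃ - 2) * (a₂ + (a₁ + t ^ r₁) ^ r₂) := by
    rw [← ar3]; congr 1; ring
  have e1' : (a₂ + (a₁ + t ^ r₁) ^ r₂) ^ (r₃ - 1 - 1) =
      (a₂ + (a₁ + t ^ r₁) ^ r₂) ^ (r₃ - 2) := by congr 1; ring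
  rw [e1', e2', e3', e1, e2, e3, e4, e5, e6]
  ring

lemma rpow_base_between {p q v : ℝ} (hp : 0 < p) (hq : 0 < q) (r : ℝ)
    (h1 : min p q ≤ v) (h2 : v ≤ max p q) :
    min (p ^ r) (q ^ r) ≤ v ^ r ∧ v ^ r ≤ max (p ^ r) (q ^ r) := by
  have hminpos : 0 < min p q := lt_min hp hq
  have hv : 0 < v := lt_of_lt_of_le hminpos h1
  have hmin : (min p q) ^ r = min p q ^ r := rfl
  rcases le_or_gt 0 r with hr | hr
  · constructor
    · refine le_trans ?_ (Real.rpow_le_rpow hminpos.le h1 hr)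
      rcases le_total p q with h | h
      · rw [min_eq_left h]; exact min_le_left _ _
      · rw [min_eq_right h]; exact min_le_right _ _
    · refine le_trans (Real.rpow_le_rpow hv.le h2 hr) ?_
      rcases le_total p q with h | h
      · rw [max_eq_right h]; exact le_max_right _ _
      · rw [max_eq_left h]; exact le_max_left _ _
  · constructor
    · refine le_trans ?_ (Real.rpow_le_rpow_of_nonpos hv h2 hr.le)
      rcases le_total p q with h | h
      · rw [max_eq_right h]; exact min_le_right _ _
      · rw [max_eq_left h]; exact min_le_left _ _
    · refine le_trans (Real.rpow_le_rpow_of_nonpos hminpos h1 hr.le) ?_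
      rcases le_total p q with h | h
      · rw [min_eq_left h]; exact le_max_left _ _
      · rw [min_eq_right h]; exact le_max_right _ _

lemma add_rpow_between {a p q v : ℝ} (hp : 0 < p) (hq : 0 < q) (r : ℝ)
    (h1 : min p q ≤ v) (h2 : v ≤ max p q) :
    min (a + p ^ r) (a + q ^ r) ≤ a + v ^ r ∧ a + v ^ r ≤ max (a + p ^ r) (a + q ^ r) := by
  obtain ⟨l, u⟩ := rpow_base_between hp hq r h1 h2
  constructor
  · calc min (a + p ^ r) (a + q ^ r) = a + min (p ^ r) (q ^ r) := min_add_add_left a _ _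
      _ ≤ a + v ^ r := by linarith
  · calc a + v ^ r ≤ a + max (p ^ r) (q ^ r) := by linarith
      _ = max (a + p ^ r) (a + q ^ r) := (max_add_add_left a _ _).symm


lemma part2core (b a₁ a₂ a₃ r₁ r₂ r₃ : ℝ) (hb : 0 < b) (x : Fin 6 → ℝ) (hm : StrictMono x)
    (hx : ∀ i, x i ∈ S3 b a₁ a₂ a₃ r₁ r₂ r₃) :
    Set.Icc (x 0) (x 5) ⊆ S3 b a₁ a₂ a₃ r₁ r₂ r₃ := by
  have hx05 : x 0 ≤ x 5 := hm.monotone (by decide)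
  have hx0pos : 0 < x 0 := (hx 0).1.1
  have hx5pos : 0 < x 5 := (hx 5).1.1
  have hw0 : 0 < a₁ + x 0 ^ r₁ := (hx 0).1.2.1
  have hw5 : 0 < a₁ + x 5 ^ r₁ := (hx 5).1.2.1
  have hs0 : 0 < a₂ + (a₁ + x 0 ^ r₁) ^ r₂ := (hx 0).1.2.2.1
  have hs5 : 0 < a₂ + (a₁ + x 5 ^ r₁) ^ r₂ := (hx 5).1.2.2.1
  -- region positivity
  have region : ∀ t, x 0 ≤ t → t ≤ x 5 →
      0 < t ∧ 0 < a₁ + t ^ r₁ ∧ 0 < a₂ + (a₁ + t ^ r₁) ^ r₂ := by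
    intro t h1 h2
    have ht : 0 < t := lt_of_lt_of_le hx0pos h1
    obtain ⟨wlo, whi⟩ := add_rpow_between (a := a₁) (v := t) hx0pos hx5pos r₁
      (by rwa [min_eq_left hx05]) (by rwa [max_eq_right hx05])
    have hwt : 0 < a₁ + t ^ r₁ := lt_of_lt_of_le (lt_min hw0 hw5) wlo
    obtain ⟨slo, shi⟩ := add_rpow_between (a := a₂) (v := a₁ + t ^ r₁) hw0 hw5 r₂ wlo whi
    have hst : 0 < a₂ + (a₁ + t ^ r₁) ^ r₂ := lt_of_lt_of_le (lt_min hs0 hs5) slo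
    exact ⟨ht, hwt, hst⟩
  -- zeros of h
  have hzero : ∀ i, (fun t => a₃ + (a₂ + (a₁ + t ^ r₁) ^ r₂) ^ r₃ - b * t) (x i) = 0 := by
    intro i; have := (hx i).2; simp only; linarith
  have hlast : x (Fin.last 5) = x 5 := rfl
  -- first Rolle step
  obtain ⟨y, hymono, hybnd, hyzero⟩ := rolle_tuple
    (fun t => a₃ + (a₂ + (a₁ + t ^ r₁) ^ r₂) ^ r₃ - b * t)
    (fun t => r₁ * r₂ * r₃ * ((a₂ + (a₁ + t ^ r₁) ^ r₂) ^ (r₃ - 1) * (a₁ + t ^ r₁) ^ (r₂ - 1) *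
        t ^ (r₁ - 1)) - b)
    x hm
    (by
      intro t h1 h2
      rw [hlast] at h2
      obtain ⟨ht, hwt, hst⟩ := region t h1 h2
      exact hasDerivAt_h b a₁ a₂ a₃ r₁ r₂ r₃ t ht hwt hst)
    hzero
  have hyreg : ∀ i, x 0 ≤ y i ∧ y i ≤ x 5 := by
    intro i
    constructor
    · exact le_trans (hm.monotone (Fin.zero_le _)) (hybnd i).1.le
    · exact le_trans (hybnd i).2.le (hm.monotone (Fin.le_last _))
  -- δ ≠ 0
  have hδ : r₁ * r₂ * r₃ ≠ 0 := by
    intro hδ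
    have h0 := hyzero 0
    simp only [hδ, zero_mul, zero_sub, neg_eq_zero] at h0
    exact hb.ne' h0
  have hr₁ : r₁ ≠ 0 := fun h => hδ (by rw [h]; ring)
  have hr₂ : r₂ ≠ 0 := fun h => hδ (by rw [h]; ring)
  -- second Rolle step
  have hylast : y (Fin.last 4) = y 4 := rfl
  obtain ⟨Y, hYmono, hYbnd, hYzero⟩ := rolle_tuple
    (fun t => r₁ * r₂ * r₃ * ((a₂ + (a₁ + t ^ r₁) ^ r₂) ^ (r₃ - 1) * (a₁ + t ^ r₁) ^ (r₂ - 1) *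
        t ^ (r₁ - 1)) - b)
    (fun t => r₁ * r₂ * r₃ * ((a₂ + (a₁ + t ^ r₁) ^ r₂) ^ (r₃ - 2) * (a₁ + t ^ r₁) ^ (r₂ - 2) *
          t ^ (r₁ - 2)) *
        ((r₁ * r₂ * r₃ - 1) * (a₁ + t ^ r₁) ^ (r₂ + 1) -
          a₁ * (r₁ * r₂ * r₃ - r₁) * (a₁ + t ^ r₁) ^ r₂ +
          a₂ * (r₁ * r₂ - 1) * (a₁ + t ^ r₁) - a₁ * a₂ * (r₁ * r₂ - r₁)))
    y hymono
    (by
      intro t h1 h2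
      rw [hylast] at h2
      obtain ⟨ht, hwt, hst⟩ := region t (le_trans (hyreg 0).1 h1) (le_trans h2 (hyreg 4).2)
      exact hasDerivAt_h1 b a₁ a₂ a₃ r₁ r₂ r₃ t ht hwt hst)
    hyzero
  have hYreg : ∀ i, x 0 ≤ Y i ∧ Y i ≤ x 5 := by
    intro i
    constructor
    · exact le_trans (hyreg _).1 (hYbnd i).1.le
    · exact le_trans (hYbnd i).2.le (hyreg _).2
  -- τ vanishes at the four points w (Y i)
  have htau0 : ∀ i, (r₁ * r₂ * r₃ - 1) * (a₁ + Y i ^ r₁) ^ (r₂ + 1) -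
      a₁ * (r₁ * r₂ * r₃ - r₁) * (a₁ + Y i ^ r₁) ^ r₂ +
      a₂ * (r₁ * r₂ - 1) * (a₁ + Y i ^ r₁) - a₁ * a₂ * (r₁ * r₂ - r₁) = 0 := by
    intro i
    obtain ⟨ht, hwt, hst⟩ := region (Y i) (hYreg i).1 (hYreg i).2
    have hz := hYzero i
    have hK : r₁ * r₂ * r₃ * ((a₂ + (a₁ + Y i ^ r₁) ^ r₂) ^ (r₃ - 2) *
        (a₁ + Y i ^ r₁) ^ (r₂ - 2) * Y i ^ (r₁ - 2)) ≠ 0 := by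
      refine mul_ne_zero hδ ?_
      positivity
    exact (mul_eq_zero.mp hz).resolve_left hK
  -- produce a strictly monotone positive tuple of roots of τ
  have hwYpos : ∀ i, 0 < a₁ + Y i ^ r₁ := fun i => (region _ (hYreg i).1 (hYreg i).2).2.1
  have taueq : ∀ v : ℝ, 0 < v → (r₁ * r₂ * r₃ - 1) * v ^ (r₂ + 1) -
      a₁ * (r₁ * r₂ * r₃ - r₁) * v ^ r₂ + a₂ * (r₁ * r₂ - 1) * v - a₁ * a₂ * (r₁ * r₂ - r₁)
        = 0 := by
    rcases lt_or_gt_of_ne hr₁ with hr₁neg | hr₁pos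
    · have key := four_term_zero (s := r₂) (A := r₁ * r₂ * r₃ - 1)
        (B := -(a₁ * (r₁ * r₂ * r₃ - r₁))) (C := a₂ * (r₁ * r₂ - 1))
        (D := -(a₁ * a₂ * (r₁ * r₂ - r₁))) hr₂
        (fun i => a₁ + Y (Fin.rev i) ^ r₁)
        (by
          intro i j hij
          have : Y (Fin.rev j) < Y (Fin.rev i) := hYmono (Fin.rev_lt_rev.mpr hij)
          have hpos : 0 < Y (Fin.rev j) := (region _ (hYreg _).1 (hYreg _).2).1
          have := Real.rpow_lt_rpow_of_neg hpos this hr₁neg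
          show a₁ + Y (Fin.rev i) ^ r₁ < a₁ + Y (Fin.rev j) ^ r₁
          linarith)
        (fun i => hwYpos _)
        (fun i => by
          have h := htau0 (Fin.rev i)
          show (r₁ * r₂ * r₃ - 1) * (a₁ + Y (Fin.rev i) ^ r₁) ^ (r₂ + 1) +
            -(a₁ * (r₁ * r₂ * r₃ - r₁)) * (a₁ + Y (Fin.rev i) ^ r₁) ^ r₂ +
            a₂ * (r₁ * r₂ - 1) * (a₁ + Y (Fin.rev i) ^ r₁) +
            -(a₁ * a₂ * (r₁ * r₂ - r₁)) = 0
          linear_combination h)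
      intro v hv
      linear_combination key v hv
    · have key := four_term_zero (s := r₂) (A := r₁ * r₂ * r₃ - 1)
        (B := -(a₁ * (r₁ * r₂ * r₃ - r₁))) (C := a₂ * (r₁ * r₂ - 1))
        (D := -(a₁ * a₂ * (r₁ * r₂ - r₁))) hr₂
        (fun i => a₁ + Y i ^ r₁)
        (by
          intro i j hij
          have hlt : Y i < Y j := hYmono hij
          have hpos : 0 < Y i := (region _ (hYreg _).1 (hYreg _).2).1
          have := Real.rpow_lt_rpow hpos.le hlt hr₁pos
          show a₁ + Y i ^ r₁ < a₁ + Y j ^ r₁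
          linarith)
        (fun i => hwYpos _)
        (fun i => by
          have h := htau0 i
          show (r₁ * r₂ * r₃ - 1) * (a₁ + Y i ^ r₁) ^ (r₂ + 1) +
            -(a₁ * (r₁ * r₂ * r₃ - r₁)) * (a₁ + Y i ^ r₁) ^ r₂ +
            a₂ * (r₁ * r₂ - 1) * (a₁ + Y i ^ r₁) +
            -(a₁ * a₂ * (r₁ * r₂ - r₁)) = 0
          linear_combination h)
      intro v hv
      linear_combination key v hv
  -- h1 has zero derivative on the whole interval, hence is constant ≡ 0
  have h1zero : ∀ t ∈ Icc (x 0) (x 5),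
      r₁ * r₂ * r₃ * ((a₂ + (a₁ + t ^ r₁) ^ r₂) ^ (r₃ - 1) * (a₁ + t ^ r₁) ^ (r₂ - 1) *
        t ^ (r₁ - 1)) - b = 0 := by
    have hder0 : ∀ t, x 0 ≤ t → t ≤ x 5 → HasDerivAt
        (fun t => r₁ * r₂ * r₃ * ((a₂ + (a₁ + t ^ r₁) ^ r₂) ^ (r₃ - 1) *
          (a₁ + t ^ r₁) ^ (r₂ - 1) * t ^ (r₁ - 1)) - b) 0 t := by
      intro t h1 h2
      obtain ⟨ht, hwt, hst⟩ := region t h1 h2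
      have hd := hasDerivAt_h1 b a₁ a₂ a₃ r₁ r₂ r₃ t ht hwt hst
      rwa [taueq _ hwt, mul_zero] at hd
    have hconst := constant_of_has_deriv_right_zero (f := fun t =>
        r₁ * r₂ * r₃ * ((a₂ + (a₁ + t ^ r₁) ^ r₂) ^ (r₃ - 1) * (a₁ + t ^ r₁) ^ (r₂ - 1) *
          t ^ (r₁ - 1)) - b)
      (a := x 0) (b := x 5)
      (fun t ht => (hder0 t ht.1 ht.2).continuousAt.continuousWithinAt)
      (fun t ht => ((hder0 t ht.1 ht.2.le).hasDerivWithinAt))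
    have hy0 : r₁ * r₂ * r₃ * ((a₂ + (a₁ + y 0 ^ r₁) ^ r₂) ^ (r₃ - 1) *
        (a₁ + y 0 ^ r₁) ^ (r₂ - 1) * y 0 ^ (r₁ - 1)) - b = 0 := hyzero 0
    have hy0mem : y 0 ∈ Icc (x 0) (x 5) := ⟨(hyreg 0).1, (hyreg 0).2⟩
    have hx0val : r₁ * r₂ * r₃ * ((a₂ + (a₁ + y 0 ^ r₁) ^ r₂) ^ (r₃ - 1) *
        (a₁ + y 0 ^ r₁) ^ (r₂ - 1) * y 0 ^ (r₁ - 1)) - b =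
        r₁ * r₂ * r₃ * ((a₂ + (a₁ + x 0 ^ r₁) ^ r₂) ^ (r₃ - 1) *
        (a₁ + x 0 ^ r₁) ^ (r₂ - 1) * x 0 ^ (r₁ - 1)) - b := hconst (y 0) hy0mem
    intro t ht
    have h1 : r₁ * r₂ * r₃ * ((a₂ + (a₁ + t ^ r₁) ^ r₂) ^ (r₃ - 1) *
        (a₁ + t ^ r₁) ^ (r₂ - 1) * t ^ (r₁ - 1)) - b =
        r₁ * r₂ * r₃ * ((a₂ + (a₁ + x 0 ^ r₁) ^ r₂) ^ (r₃ - 1) *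
        (a₁ + x 0 ^ r₁) ^ (r₂ - 1) * x 0 ^ (r₁ - 1)) - b := hconst t ht
    linarith
  -- h is constant ≡ 0 on the interval
  have hzero' : ∀ t ∈ Icc (x 0) (x 5),
      a₃ + (a₂ + (a₁ + t ^ r₁) ^ r₂) ^ r₃ - b * t = 0 := by
    have hder0 : ∀ t, x 0 ≤ t → t ≤ x 5 → HasDerivAt
        (fun t => a₃ + (a₂ + (a₁ + t ^ r₁) ^ r₂) ^ r₃ - b * t) 0 t := by
      intro t h1 h2
      obtain ⟨ht, hwt, hst⟩ := region t h1 h2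
      have hd := hasDerivAt_h b a₁ a₂ a₃ r₁ r₂ r₃ t ht hwt hst
      rwa [h1zero t ⟨h1, h2⟩] at hd
    have hconst := constant_of_has_deriv_right_zero (f := fun t =>
        a₃ + (a₂ + (a₁ + t ^ r₁) ^ r₂) ^ r₃ - b * t)
      (a := x 0) (b := x 5)
      (fun t ht => (hder0 t ht.1 ht.2).continuousAt.continuousWithinAt)
      (fun t ht => ((hder0 t ht.1 ht.2.le).hasDerivWithinAt))
    intro t ht
    have h1 : a₃ + (a₂ + (a₁ + t ^ r₁) ^ r₂) ^ r₃ - b * t =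
        a₃ + (a₂ + (a₁ + x 0 ^ r₁) ^ r₂) ^ r₃ - b * x 0 := hconst t ht
    have h2 : a₃ + (a₂ + (a₁ + x 0 ^ r₁) ^ r₂) ^ r₃ - b * x 0 = 0 := hzero 0
    linarith
  -- conclusion
  intro t ht
  obtain ⟨hpt, hwt, hst⟩ := region t ht.1 ht.2
  have heq := hzero' t ht
  have heq' : a₃ + (a₂ + (a₁ + t ^ r₁) ^ r₂) ^ r₃ = b * t := by linarith
  exact ⟨⟨hpt, hwt, hst, by rw [heq']; positivity⟩, heq'⟩

lemma le_rpow_nd {x q : ℝ} (hx : 0 < x) (hq : 0 ≤ q) {n d : ℕ} (hd : 0 < d)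
    (h : q ^ d ≤ x ^ n) : q ≤ x ^ ((n : ℝ) / (d : ℝ)) := by
  have hxp : 0 < x ^ ((n : ℝ) / (d : ℝ)) := Real.rpow_pos_of_pos hx _
  have key : (x ^ ((n : ℝ) / (d : ℝ))) ^ d = x ^ n := by
    rw [← Real.rpow_natCast (x ^ ((n : ℝ) / (d : ℝ))) d, ← Real.rpow_mul hx.le,
      div_mul_cancel₀ _ (by exact_mod_cast hd.ne' : (d : ℝ) ≠ 0), Real.rpow_natCast]
  exact le_of_pow_le_pow_left₀ hd.ne' hxp.le (key ▸ h)

lemma rpow_le_nd {x q : ℝ} (hx : 0 < x) (hq : 0 ≤ q) {n d : ℕ} (hd : 0 < d)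
    (h : x ^ n ≤ q ^ d) : x ^ ((n : ℝ) / (d : ℝ)) ≤ q := by
  have key : (x ^ ((n : ℝ) / (d : ℝ))) ^ d = x ^ n := by
    rw [← Real.rpow_natCast (x ^ ((n : ℝ) / (d : ℝ))) d, ← Real.rpow_mul hx.le,
      div_mul_cancel₀ _ (by exact_mod_cast hd.ne' : (d : ℝ) ≠ 0), Real.rpow_natCast]
  exact le_of_pow_le_pow_left₀ hd.ne' hq (key ▸ h)

lemma le_rpow53 {x q : ℝ} (hx : 0 < x) (hq : 0 ≤ q) (h : q ^ 150 ≤ x ^ 53) :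
    q ≤ x ^ ((53 : ℝ) / 150) := by
  have e : ((53 : ℕ) : ℝ) / ((150 : ℕ) : ℝ) = (53 : ℝ) / 150 := by norm_num
  rw [← e]; exact le_rpow_nd hx hq (by norm_num) h

lemma rpow53_le {x q : ℝ} (hx : 0 < x) (hq : 0 ≤ q) (h : x ^ 53 ≤ q ^ 150) :
    x ^ ((53 : ℝ) / 150) ≤ q := by
  have e : ((53 : ℕ) : ℝ) / ((150 : ℕ) : ℝ) = (53 : ℝ) / 150 := by norm_num
  rw [← e]; exact rpow_le_nd hx hq (by norm_num) h

lemma le_rpow118 {x q : ℝ} (hx : 0 < x) (hq : 0 ≤ q) (h : q ^ 8 ≤ x ^ 11) :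
    q ≤ x ^ ((11 : ℝ) / 8) := by
  have e : ((11 : ℕ) : ℝ) / ((8 : ℕ) : ℝ) = (11 : ℝ) / 8 := by norm_num
  rw [← e]; exact le_rpow_nd hx hq (by norm_num) h

lemma rpow118_le {x q : ℝ} (hx : 0 < x) (hq : 0 ≤ q) (h : x ^ 11 ≤ q ^ 8) :
    x ^ ((11 : ℝ) / 8) ≤ q := by
  have e : ((11 : ℕ) : ℝ) / ((8 : ℕ) : ℝ) = (11 : ℝ) / 8 := by norm_num
  rw [← e]; exact rpow_le_nd hx hq (by norm_num) h

lemma g3_bounds (t q1 q2 m1 m2 : ℝ) (ht : 0 < t)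
    (h1 : q1 ≤ t ^ ((53 : ℝ) / 150)) (h2 : t ^ ((53 : ℝ) / 150) ≤ q2)
    (hw1 : 0 < -0.012 + q1)
    (h3 : m1 ≤ ((-0.012 : ℝ) + q1) ^ ((11 : ℝ) / 8))
    (h4 : ((-0.012 : ℝ) + q2) ^ ((11 : ℝ) / 8) ≤ m2)
    (hm1 : (0 : ℝ) ≤ 0.0035836 + m1) :
    (0.0035836 + m1) ^ 2 ≤
      ((0.0035836 : ℝ) + ((-0.012) + t ^ ((53 : ℝ) / 150)) ^ ((11 : ℝ) / 8)) ^ (2 : ℝ) ∧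
    ((0.0035836 : ℝ) + ((-0.012) + t ^ ((53 : ℝ) / 150)) ^ ((11 : ℝ) / 8)) ^ (2 : ℝ) ≤
      (0.0035836 + m2) ^ 2 := by
  have hwlo : (-0.012 : ℝ) + q1 ≤ -0.012 + t ^ ((53 : ℝ) / 150) := by linarith
  have hwhi : (-0.012 : ℝ) + t ^ ((53 : ℝ) / 150) ≤ -0.012 + q2 := by linarith
  have hw : (0 : ℝ) < -0.012 + t ^ ((53 : ℝ) / 150) := lt_of_lt_of_le hw1 hwlo
  have hv1 : ((-0.012 : ℝ) + q1) ^ ((11 : ℝ) / 8) ≤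
      ((-0.012 : ℝ) + t ^ ((53 : ℝ) / 150)) ^ ((11 : ℝ) / 8) :=
    Real.rpow_le_rpow hw1.le hwlo (by norm_num)
  have hv2 : ((-0.012 : ℝ) + t ^ ((53 : ℝ) / 150)) ^ ((11 : ℝ) / 8) ≤
      ((-0.012 : ℝ) + q2) ^ ((11 : ℝ) / 8) :=
    Real.rpow_le_rpow hw.le hwhi (by norm_num)
  have e2 : ((0.0035836 : ℝ) + ((-0.012) + t ^ ((53 : ℝ) / 150)) ^ ((11 : ℝ) / 8)) ^ (2 : ℝ) =
      ((0.0035836 : ℝ) + ((-0.012) + t ^ ((53 : ℝ) / 150)) ^ ((11 : ℝ) / 8)) ^ (2 : ℕ) := by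
    rw [← Real.rpow_natCast _ 2]; norm_num
  rw [e2]
  constructor
  · apply pow_le_pow_left₀ hm1; linarith
  · apply pow_le_pow_left₀ (by linarith); linarith

lemma sgn0 : 0 < -8.39e-6 + ((0.0035836 : ℝ) + ((-0.012) + (1/100000 : ℝ) ^ ((53:ℝ)/150)) ^ ((11:ℝ)/8)) ^ (2:ℝ) - 1 * (1/100000 : ℝ) := by
  obtain ⟨lo, hi⟩ := g3_bounds (1/100000) (53479/3125000) (1711329/100000000) (707069/1000000000) (1381/1953125) (by norm_num)
    (le_rpow53 (by norm_num) (by norm_num) (by norm_num))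
    (rpow53_le (by norm_num) (by norm_num) (by norm_num))
    (by norm_num)
    (le_rpow118 (by norm_num) (by norm_num) (by norm_num))
    (rpow118_le (by norm_num) (by norm_num) (by norm_num))
    (by norm_num)
  have hnum : (0:ℝ) < -8.39e-6 + ((0.0035836:ℝ) + 707069/1000000000)^2 - 1 * (1/100000:ℝ) := by norm_num
  linarith

lemma sgn1 : -8.39e-6 + ((0.0035836 : ℝ) + ((-0.012) + (1/62500 : ℝ) ^ ((53:ℝ)/150)) ^ ((11:ℝ)/8)) ^ (2:ℝ) - 1 * (1/62500 : ℝ) < 0 := by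
  obtain ⟨lo, hi⟩ := g3_bounds (1/62500) (404097/20000000) (1010243/50000000) (169339/125000000) (270943/200000000) (by norm_num)
    (le_rpow53 (by norm_num) (by norm_num) (by norm_num))
    (rpow53_le (by norm_num) (by norm_num) (by norm_num))
    (by norm_num)
    (le_rpow118 (by norm_num) (by norm_num) (by norm_num))
    (rpow118_le (by norm_num) (by norm_num) (by norm_num))
    (by norm_num)
  have hnum : -8.39e-6 + ((0.0035836:ℝ) + 270943/200000000)^2 - 1 * (1/62500:ℝ) < 0 := by norm_num
  linarith

lemma sgn2 : 0 < -8.39e-6 + ((0.0035836 : ℝ) + ((-0.012) + (3/100000 : ℝ) ^ ((53:ℝ)/150)) ^ ((11:ℝ)/8)) ^ (2:ℝ) - 1 * (3/100000 : ℝ) := by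
  obtain ⟨lo, hi⟩ := g3_bounds (3/100000) (2522993/100000000) (1261497/50000000) (2613013/1000000000) (2613017/1000000000) (by norm_num)
    (le_rpow53 (by norm_num) (by norm_num) (by norm_num))
    (rpow53_le (by norm_num) (by norm_num) (by norm_num))
    (by norm_num)
    (le_rpow118 (by norm_num) (by norm_num) (by norm_num))
    (rpow118_le (by norm_num) (by norm_num) (by norm_num))
    (by norm_num)
  have hnum : (0:ℝ) < -8.39e-6 + ((0.0035836:ℝ) + 2613013/1000000000)^2 - 1 * (3/100000:ℝ) := by norm_num
  linarith

lemma sgn3 : -8.39e-6 + ((0.0035836 : ℝ) + ((-0.012) + (3/50000 : ℝ) ^ ((53:ℝ)/150)) ^ ((11:ℝ)/8)) ^ (2:ℝ) - 1 * (3/50000 : ℝ) < 0 := by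
  obtain ⟨lo, hi⟩ := g3_bounds (3/50000) (1611573/50000000) (3223147/100000000) (4685839/1000000000) (4685843/1000000000) (by norm_num)
    (le_rpow53 (by norm_num) (by norm_num) (by norm_num))
    (rpow53_le (by norm_num) (by norm_num) (by norm_num))
    (by norm_num)
    (le_rpow118 (by norm_num) (by norm_num) (by norm_num))
    (rpow118_le (by norm_num) (by norm_num) (by norm_num))
    (by norm_num)
  have hnum : -8.39e-6 + ((0.0035836:ℝ) + 4685843/1000000000)^2 - 1 * (3/50000:ℝ) < 0 := by norm_num
  linarith

lemma sgn4 : 0 < -8.39e-6 + ((0.0035836 : ℝ) + ((-0.012) + (1/10000 : ℝ) ^ ((53:ℝ)/150)) ^ ((11:ℝ)/8)) ^ (2:ℝ) - 1 * (1/10000 : ℝ) := by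
  obtain ⟨lo, hi⟩ := g3_bounds (1/10000) (772141/20000000) (1930353/50000000) (682921/100000000) (1365843/200000000) (by norm_num)
    (le_rpow53 (by norm_num) (by norm_num) (by norm_num))
    (rpow53_le (by norm_num) (by norm_num) (by norm_num))
    (by norm_num)
    (le_rpow118 (by norm_num) (by norm_num) (by norm_num))
    (rpow118_le (by norm_num) (by norm_num) (by norm_num))
    (by norm_num)
  have hnum : (0:ℝ) < -8.39e-6 + ((0.0035836:ℝ) + 682921/100000000)^2 - 1 * (1/10000:ℝ) := by norm_num
  linarith

lemma sgn5 : -8.39e-6 + ((0.0035836 : ℝ) + ((-0.012) + (1 : ℝ) ^ ((53:ℝ)/150)) ^ ((11:ℝ)/8)) ^ (2:ℝ) - 1 * (1 : ℝ) < 0 := by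
  obtain ⟨lo, hi⟩ := g3_bounds (1) (1) (100000001/100000000) (491768609/500000000) (61471077/62500000) (by norm_num)
    (le_rpow53 (by norm_num) (by norm_num) (by norm_num))
    (rpow53_le (by norm_num) (by norm_num) (by norm_num))
    (by norm_num)
    (le_rpow118 (by norm_num) (by norm_num) (by norm_num))
    (rpow118_le (by norm_num) (by norm_num) (by norm_num))
    (by norm_num)
  have hnum : -8.39e-6 + ((0.0035836:ℝ) + 61471077/62500000)^2 - 1 * (1:ℝ) < 0 := by norm_num
  linarith

lemma wpos : ∀ t : ℝ, 1/100000 ≤ t → 0 < (-0.012 : ℝ) + t ^ ((53:ℝ)/150) := by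
  intro t ht
  have h0 : (53479/3125000 : ℝ) ≤ (1/100000 : ℝ) ^ ((53:ℝ)/150) :=
    le_rpow53 (by norm_num) (by norm_num) (by norm_num)
  have h1 : (1/100000 : ℝ) ^ ((53:ℝ)/150) ≤ t ^ ((53:ℝ)/150) :=
    Real.rpow_le_rpow (by norm_num) ht (by norm_num)
  have : (0.012 : ℝ) < 53479/3125000 := by norm_num
  linarith

lemma spos : ∀ t : ℝ, 1/100000 ≤ t →
    0 < (0.0035836 : ℝ) + ((-0.012) + t ^ ((53:ℝ)/150)) ^ ((11:ℝ)/8) := by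
  intro t ht
  have := Real.rpow_pos_of_pos (wpos t ht) ((11:ℝ)/8)
  norm_num at this ⊢
  linarith

lemma contOn (lo hi : ℝ) (hlo : 1/100000 ≤ lo) :
    ContinuousOn (fun t : ℝ => -8.39e-6 + ((0.0035836 : ℝ) +
      ((-0.012) + t ^ ((53:ℝ)/150)) ^ ((11:ℝ)/8)) ^ (2:ℝ) - 1 * t) (Icc lo hi) := by
  intro t ht
  have ht' : 1/100000 ≤ t := le_trans hlo ht.1
  have hd := hasDerivAt_h 1 (-0.012) 0.0035836 (-8.39e-6) ((53:ℝ)/150) ((11:ℝ)/8) 2 t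
    (by linarith) (wpos t ht') (spos t ht')
  exact hd.continuousAt.continuousWithinAt

set_option maxHeartbeats 2000000 in
lemma roots : ∃ s : Fin 5 → ℝ, StrictMono s ∧
    (∀ i, s i ∈ S3 1 (-0.012) 0.0035836 (-8.39e-6) (53/150) (11/8) 2) ∧
    (1/100000 < s 0 ∧ s 0 < 1/62500) ∧ (1/62500 < s 1 ∧ s 1 < 3/100000) ∧
    (3/100000 < s 2 ∧ s 2 < 3/50000) ∧ (3/50000 < s 3 ∧ s 3 < 1/10000) ∧
    (1/10000 < s 4 ∧ s 4 < 1) := by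
  set f : ℝ → ℝ := fun t : ℝ => -8.39e-6 + ((0.0035836 : ℝ) +
      ((-0.012) + t ^ ((53:ℝ)/150)) ^ ((11:ℝ)/8)) ^ (2:ℝ) - 1 * t with hf
  have mem0 : (0:ℝ) ∈ Ioo (f (1/62500)) (f (1/100000)) := ⟨sgn1, sgn0⟩
  have r0 := intermediate_value_Ioo' (by norm_num : (1/100000:ℝ) ≤ 1/62500)
    (contOn _ _ (by norm_num)) mem0
  have mem1 : (0:ℝ) ∈ Ioo (f (1/62500)) (f (3/100000)) := ⟨sgn1, sgn2⟩
  have r1 := intermediate_value_Ioo (by norm_num : (1/62500:ℝ) ≤ 3/100000)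
    (contOn _ _ (by norm_num)) mem1
  have mem2 : (0:ℝ) ∈ Ioo (f (3/50000)) (f (3/100000)) := ⟨sgn3, sgn2⟩
  have r2 := intermediate_value_Ioo' (by norm_num : (3/100000:ℝ) ≤ 3/50000)
    (contOn _ _ (by norm_num)) mem2
  have mem3 : (0:ℝ) ∈ Ioo (f (3/50000)) (f (1/10000)) := ⟨sgn3, sgn4⟩
  have r3 := intermediate_value_Ioo (by norm_num : (3/50000:ℝ) ≤ 1/10000)
    (contOn _ _ (by norm_num)) mem3
  have mem4 : (0:ℝ) ∈ Ioo (f 1) (f (1/10000)) := ⟨sgn5, sgn4⟩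
  have r4 := intermediate_value_Ioo' (by norm_num : (1/10000:ℝ) ≤ 1)
    (contOn _ _ (by norm_num)) mem4
  obtain ⟨s0, hs0, hfs0⟩ := r0
  obtain ⟨s1, hs1, hfs1⟩ := r1
  obtain ⟨s2, hs2, hfs2⟩ := r2
  obtain ⟨s3, hs3, hfs3⟩ := r3
  obtain ⟨s4, hs4, hfs4⟩ := r4
  have mem : ∀ u : ℝ, 1/100000 < u → f u = 0 →
      u ∈ S3 1 (-0.012) 0.0035836 (-8.39e-6) (53/150) (11/8) 2 := by
    intro u hu hfu
    have hu' : (1/100000 : ℝ) ≤ u := hu.le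
    have heq : (-8.39e-6 : ℝ) + ((0.0035836 : ℝ) +
        ((-0.012) + u ^ ((53:ℝ)/150)) ^ ((11:ℝ)/8)) ^ (2:ℝ) = 1 * u := by
      have : f u = 0 := hfu
      rw [hf] at this
      simp only at this
      linarith
    refine ⟨⟨by linarith, wpos u hu', spos u hu', ?_⟩, heq⟩
    rw [heq]
    linarith
  have l01 : s0 < s1 := by linarith [hs0.2, hs1.1]
  have l12 : s1 < s2 := by linarith [hs1.2, hs2.1]
  have l23 : s2 < s3 := by linarith [hs2.2, hs3.1]
  have l34 : s3 < s4 := by linarith [hs3.2, hs4.1]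
  have l02 : s0 < s2 := lt_trans l01 l12
  have l03 : s0 < s3 := lt_trans l02 l23
  have l04 : s0 < s4 := lt_trans l03 l34
  have l13 : s1 < s3 := lt_trans l12 l23
  have l14 : s1 < s4 := lt_trans l13 l34
  have l24 : s2 < s4 := lt_trans l23 l34
  refine ⟨![s0, s1, s2, s3, s4], ?_, ?_, ⟨hs0.1, hs0.2⟩, ⟨hs1.1, hs1.2⟩, ⟨hs2.1, hs2.2⟩,
    ⟨hs3.1, hs3.2⟩, ⟨hs4.1, hs4.2⟩⟩
  · intro i j hij
    fin_cases i <;> fin_cases j <;>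
      first
      | exact absurd hij (by decide)
      | exact l01 | exact l02 | exact l03 | exact l04 | exact l12 | exact l13
      | exact l14 | exact l23 | exact l24 | exact l34
  · intro i
    fin_cases i
    · exact mem s0 hs0.1 hfs0
    · exact mem s1 (by linarith [hs1.1]) hfs1
    · exact mem s2 (by linarith [hs2.1]) hfs2
    · exact mem s3 (by linarith [hs3.1]) hfs3
    · exact mem s4 (by linarith [hs4.1]) hfs4

end StatementSixteenHelpers

/-- For `b = 1`, `a₃ = −8.39×10⁻⁶`, `a₂ = 0.0035836`, `a₁ = −0.012`,
`r₁ = 53/150`, `r₂ = 11/8`, `r₃ = 2`, the equation `a₃ + (a₂ + (a₁ + x^{r₁})^{r₂})^{r₃} = x`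
has five distinct isolated solutions in `I(a,r)` (in particular some choice of parameters
yields five distinct solutions); consequently `fp(3) = 5`: the solution set has exactly `5`
connected components in this example, and for every choice of parameters it has at most `5`. -/


theorem statement16 :
    (∃ x : Fin 5 → ℝ, StrictMono x ∧
      (∀ i, x i ∈ S3 1 (-0.012) 0.0035836 (-8.39e-6) (53/150) (11/8) 2) ∧
      (∀ i j, i ≠ j →
        ¬ Set.uIcc (x i) (x j) ⊆ S3 1 (-0.012) 0.0035836 (-8.39e-6) (53/150) (11/8) 2)) ∧
    (∀ b a₁ a₂ a₃ r₁ r₂ r₃ : ℝ, 0 < b →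
      ∀ f : Fin 6 → ℝ, (∀ i, f i ∈ S3 b a₁ a₂ a₃ r₁ r₂ r₃) →
        ∃ i j, i ≠ j ∧ Set.uIcc (f i) (f j) ⊆ S3 b a₁ a₂ a₃ r₁ r₂ r₃) := by
  constructor
  · obtain ⟨s, hmono, hmem, b0, b1, b2, b3, b4⟩ := roots
    have notin : ∀ p : ℝ, (-8.39e-6 + ((0.0035836 : ℝ) +
        ((-0.012) + p ^ ((53:ℝ)/150)) ^ ((11:ℝ)/8)) ^ (2:ℝ) - 1 * p ≠ 0) →
        p ∉ S3 1 (-0.012) 0.0035836 (-8.39e-6) (53/150) (11/8) 2 := by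
      intro p hne hp
      have h2 := hp.2
      exact hne (by linarith)
    have n1 : (1/62500:ℝ) ∉ S3 1 (-0.012) 0.0035836 (-8.39e-6) (53/150) (11/8) 2 :=
      notin _ (ne_of_lt sgn1)
    have n2 : (3/100000:ℝ) ∉ S3 1 (-0.012) 0.0035836 (-8.39e-6) (53/150) (11/8) 2 :=
      notin _ (ne_of_gt sgn2)
    have n3 : (3/50000:ℝ) ∉ S3 1 (-0.012) 0.0035836 (-8.39e-6) (53/150) (11/8) 2 :=
      notin _ (ne_of_lt sgn3)
    have n4 : (1/10000:ℝ) ∉ S3 1 (-0.012) 0.0035836 (-8.39e-6) (53/150) (11/8) 2 :=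
      notin _ (ne_of_gt sgn4)
    have u0 : s 0 ≤ 1/62500 := b0.2.le
    have u1 : s 1 ≤ 3/100000 := b1.2.le
    have u2 : s 2 ≤ 3/50000 := b2.2.le
    have u3 : s 3 ≤ 1/10000 := b3.2.le
    have d11 : (1/62500:ℝ) ≤ s 1 := b1.1.le
    have d12 : (1/62500:ℝ) ≤ s 2 := by linarith [b2.1]
    have d13 : (1/62500:ℝ) ≤ s 3 := by linarith [b3.1]
    have d14 : (1/62500:ℝ) ≤ s 4 := by linarith [b4.1]
    have d22 : (3/100000:ℝ) ≤ s 2 := b2.1.le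
    have d23 : (3/100000:ℝ) ≤ s 3 := by linarith [b3.1]
    have d24 : (3/100000:ℝ) ≤ s 4 := by linarith [b4.1]
    have d33 : (3/50000:ℝ) ≤ s 3 := b3.1.le
    have d34 : (3/50000:ℝ) ≤ s 4 := by linarith [b4.1]
    have d44 : (1/10000:ℝ) ≤ s 4 := b4.1.le
    have key : ∀ i j : Fin 5, i < j → ∃ p : ℝ, s i ≤ p ∧ p ≤ s j ∧
        p ∉ S3 1 (-0.012) 0.0035836 (-8.39e-6) (53/150) (11/8) 2 := by
      intro i j hij
      fin_cases i <;> fin_cases j <;>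
        first
        | exact absurd hij (by decide)
        | exact ⟨1/62500, u0, d11, n1⟩
        | exact ⟨1/62500, u0, d12, n1⟩
        | exact ⟨1/62500, u0, d13, n1⟩
        | exact ⟨1/62500, u0, d14, n1⟩
        | exact ⟨3/100000, u1, d22, n2⟩
        | exact ⟨3/100000, u1, d23, n2⟩
        | exact ⟨3/100000, u1, d24, n2⟩
        | exact ⟨3/50000, u2, d33, n3⟩
        | exact ⟨3/50000, u2, d34, n3⟩
        | exact ⟨1/10000, u3, d44, n4⟩
    refine ⟨s, hmono, hmem, ?_⟩
    intro i j hij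
    rcases hij.lt_or_gt with h | h
    · obtain ⟨p, hp1, hp2, hp3⟩ := key i j h
      intro hsub
      exact hp3 (hsub (Set.mem_uIcc.mpr (Or.inl ⟨hp1, hp2⟩)))
    · obtain ⟨p, hp1, hp2, hp3⟩ := key j i h
      intro hsub
      exact hp3 (hsub (Set.mem_uIcc.mpr (Or.inr ⟨hp1, hp2⟩)))
  · intro b a₁ a₂ a₃ r₁ r₂ r₃ hb f hf
    by_cases hinj : Function.Injective f
    · set σ := Tuple.sort f with hσ
      have hmono : Monotone (f ∘ σ) := Tuple.monotone_sort f
      have hsm : StrictMono (f ∘ σ) := hmono.strictMono_of_injective (hinj.comp σ.injective)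
      have hsub := part2core b a₁ a₂ a₃ r₁ r₂ r₃ hb (f ∘ σ) hsm (fun i => hf _)
      refine ⟨σ 0, σ 5, fun h => (by decide : (0 : Fin 6) ≠ 5) (σ.injective h), ?_⟩
      have h05 : f (σ 0) ≤ f (σ 5) := hsm.monotone (by decide)
      rw [Set.uIcc_of_le h05]
      exact hsub
    · obtain ⟨i, j, hij, hne⟩ := Function.not_injective_iff.mp hinj
      refine ⟨i, j, hne, ?_⟩
      rw [hij, Set.uIcc_self]
      intro t ht
      rw [Set.mem_singleton_iff.mp ht]
      exact hf j
end
end
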